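/- arXiv:math/9911135 — 9 statements merged into one kernel-verified Lean document; each statement's English description precedes it below -/
import Mathlib

section
/- Let S be a semigroup for which there exists a group G and an injective semigroup homomorphism φ : S → G such that every element of G can be written as φ(s)⁻¹·φ(t) with s, t ∈ S. Then S is cancellative and Ss ∩ St ≠ ∅ for every pair s, t ∈ S; that is, S is an Ore semigroup. -/
/-- Writing `φ s * (φ t)⁻¹ = (φ u)⁻¹ * φ v` gives `φ (u * s) = φ (v * t)`. -/
theorem exists_mul_eq_mul_of_forall_eq_inv_mul {S G : Type*} [Mul S] [Group G] (φ : S → G)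
    (hhom : ∀ s t : S, φ (s * t) = φ s * φ t) (hinj : Function.Injective φ)
    (hgen : ∀ g : G, ∃ s t : S, g = (φ s)⁻¹ * φ t) (s t : S) :
    ∃ u v : S, u * s = v * t := by
  obtain ⟨u, v, huv⟩ := hgen (φ s * (φ t)⁻¹)
  refine ⟨u, v, hinj ?_⟩
  rw [mul_inv_eq_iff_eq_mul, mul_assoc, eq_inv_mul_iff_mul_eq] at huv
  rw [hhom, hhom, huv]

/-- **Converse of Ore's theorem.**
If a semigroup `S` admits an injective semigroup homomorphism `φ : S → G` into
a group `G` such that every element of `G` has the form `(φ s)⁻¹ * φ t` with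
`s t ∈ S`, then `S` is cancellative and `Ss ∩ St ≠ ∅` for every `s t ∈ S`;
that is, `S` is an Ore semigroup. -/
theorem enveloping_group_implies_ore {S : Type u} [Semigroup S]
    {G : Type v} [Group G] (φ : S → G)
    (hhom : ∀ s t : S, φ (s * t) = φ s * φ t)
    (hinj : Function.Injective φ)
    (hgen : ∀ g : G, ∃ s t : S, g = (φ s)⁻¹ * φ t) :
    (∀ a b c : S, a * b = a * c → b = c) ∧
    (∀ a b c : S, b * a = c * a → b = c) ∧
    (∀ s t : S, ∃ u v : S, u * s = v * t) := by
  have : IsCancelMul S := hinj.isCancelMul φ hhom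
  exact ⟨fun _ _ _ => mul_left_cancel, fun _ _ _ => mul_right_cancel,
    exists_mul_eq_mul_of_forall_eq_inv_mul φ hhom hinj hgen⟩
end

section
/- Let S be an Ore semigroup and suppose (G₁, φ₁) and (G₂, φ₂) are two enveloping groups for S, i.e. for k = 1, 2, φₖ : S → Gₖ is an injective semigroup homomorphism into the group Gₖ and every element of Gₖ has the form φₖ(s)⁻¹·φₖ(t) with s, t ∈ S. Then there exists a group isomorphism θ : G₁ → G₂ such that θ ∘ φ₁ = φ₂. -/
section OreAux

variable {S : Type u} [Semigroup S]

/-- Extending a fraction by a common left factor does not change it. -/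
lemma ore_frac_ext {G : Type v} [Group G] (φ : S →ₙ* G) (u s t : S) :
    (φ (u * s))⁻¹ * φ (u * t) = (φ s)⁻¹ * φ t := by
  rw [map_mul, map_mul, mul_inv_rev, mul_assoc, inv_mul_cancel_left]

/-- Multiplication of fractions. -/
lemma ore_frac_mul {G : Type v} [Group G] (φ : S →ₙ* G) {u v b c : S} (a d : S)
    (h : u * b = v * c) :
    ((φ a)⁻¹ * φ b) * ((φ c)⁻¹ * φ d) = (φ (u * a))⁻¹ * φ (v * d) := by
  have h' : φ u * φ b = φ v * φ c := by rw [← map_mul, ← map_mul, h]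
  have hb : φ b * (φ c)⁻¹ = (φ u)⁻¹ * φ v := by
    have hb' : φ b = (φ u)⁻¹ * (φ v * φ c) := by rw [← h', inv_mul_cancel_left]
    rw [hb']; group
  rw [map_mul, map_mul, mul_inv_rev]
  calc ((φ a)⁻¹ * φ b) * ((φ c)⁻¹ * φ d)
      = (φ a)⁻¹ * (φ b * (φ c)⁻¹) * φ d := by group
    _ = (φ a)⁻¹ * ((φ u)⁻¹ * φ v) * φ d := by rw [hb]
    _ = (φ a)⁻¹ * (φ u)⁻¹ * (φ v * φ d) := by group

/-- Transfer of equality of fractions from one enveloping group to another. -/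
lemma ore_frac_transfer
    (hOre : ∀ s t : S, ∃ u v : S, u * s = v * t)
    {G₁ : Type v} [Group G₁] (φ₁ : S →ₙ* G₁) (hinj₁ : Function.Injective φ₁)
    {G₂ : Type w} [Group G₂] (φ₂ : S →ₙ* G₂)
    {s t s' t' : S} (h : (φ₁ s)⁻¹ * φ₁ t = (φ₁ s')⁻¹ * φ₁ t') :
    (φ₂ s)⁻¹ * φ₂ t = (φ₂ s')⁻¹ * φ₂ t' := by
  obtain ⟨u, v, huv⟩ := hOre s s'
  have h1 : (φ₁ (u * s))⁻¹ * φ₁ (u * t) = (φ₁ (v * s'))⁻¹ * φ₁ (v * t') := by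
    rw [ore_frac_ext, ore_frac_ext, h]
  rw [huv] at h1
  have h2 : φ₁ (u * t) = φ₁ (v * t') := by
    have := congrArg (fun x => φ₁ (v * s') * x) h1
    simpa only [mul_inv_cancel_left] using this
  have h3 : u * t = v * t' := hinj₁ h2
  calc (φ₂ s)⁻¹ * φ₂ t = (φ₂ (u * s))⁻¹ * φ₂ (u * t) := (ore_frac_ext φ₂ u s t).symm
    _ = (φ₂ (v * s'))⁻¹ * φ₂ (v * t') := by rw [huv, h3]
    _ = (φ₂ s')⁻¹ * φ₂ t' := ore_frac_ext φ₂ v s' t'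

end OreAux

/-- **Uniqueness of the enveloping group of an Ore semigroup.**
If `(G₁, φ₁)` and `(G₂, φ₂)` are two enveloping groups of an Ore semigroup `S`,
then there is a group isomorphism `θ : G₁ ≃* G₂` with `θ ∘ φ₁ = φ₂`. -/
theorem ore_enveloping_group_unique {S : Type u} [Semigroup S]
    (hcancel_left : ∀ a b c : S, a * b = a * c → b = c)
    (hcancel_right : ∀ a b c : S, b * a = c * a → b = c)
    (hOre : ∀ s t : S, ∃ u v : S, u * s = v * t)
    {G₁ : Type v} [Group G₁] (φ₁ : S →ₙ* G₁)
    (hinj₁ : Function.Injective φ₁)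
    (hgen₁ : ∀ g : G₁, ∃ s t : S, g = (φ₁ s)⁻¹ * φ₁ t)
    {G₂ : Type w} [Group G₂] (φ₂ : S →ₙ* G₂)
    (hinj₂ : Function.Injective φ₂)
    (hgen₂ : ∀ g : G₂, ∃ s t : S, g = (φ₂ s)⁻¹ * φ₂ t) :
    ∃ θ : G₁ ≃* G₂, ∀ s : S, θ (φ₁ s) = φ₂ s := by
  classical
  choose f₁ f₂ hf using hgen₁
  choose k₁ k₂ hk using hgen₂
  set F : G₁ → G₂ := fun g => (φ₂ (f₁ g))⁻¹ * φ₂ (f₂ g) with hF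
  set K : G₂ → G₁ := fun g => (φ₁ (k₁ g))⁻¹ * φ₁ (k₂ g) with hK
  have FP : ∀ s t : S, F ((φ₁ s)⁻¹ * φ₁ t) = (φ₂ s)⁻¹ * φ₂ t := by
    intro s t
    exact ore_frac_transfer hOre φ₁ hinj₁ φ₂
      ((hf ((φ₁ s)⁻¹ * φ₁ t)).symm)
  have KP : ∀ s t : S, K ((φ₂ s)⁻¹ * φ₂ t) = (φ₁ s)⁻¹ * φ₁ t := by
    intro s t
    exact ore_frac_transfer hOre φ₂ hinj₂ φ₁
      ((hk ((φ₂ s)⁻¹ * φ₂ t)).symm)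
  have hleft : Function.LeftInverse K F := by
    intro g
    rw [hF]
    simp only
    rw [KP]
    exact (hf g).symm
  have hright : Function.RightInverse K F := by
    intro g
    rw [hK]
    simp only
    rw [FP]
    exact (hk g).symm
  have hmul : ∀ g h : G₁, F (g * h) = F g * F h := by
    intro g h
    obtain ⟨u, v, huv⟩ := hOre (f₂ g) (f₁ h)
    have hgh : g * h = (φ₁ (u * f₁ g))⁻¹ * φ₁ (v * f₂ h) := by
      conv_lhs => rw [hf g, hf h]
      exact ore_frac_mul φ₁ (f₁ g) (f₂ h) huv
    rw [hgh, FP]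
    conv_rhs => rw [hF]
    simp only
    exact (ore_frac_mul φ₂ (f₁ g) (f₂ h) huv).symm
  set n : S := f₁ (1 : G₁) with hn
  refine ⟨⟨⟨F, K, hleft, hright⟩, fun g h => hmul g h⟩, fun s => ?_⟩
  have hs : φ₁ s = (φ₁ n)⁻¹ * φ₁ (n * s) := by
    rw [map_mul, inv_mul_cancel_left]
  show F (φ₁ s) = φ₂ s
  rw [hs, FP, map_mul, inv_mul_cancel_left]
end

section
/- Let S be an Ore semigroup with enveloping group (G, φ), i.e. φ : S → G is an injective semigroup homomorphism into the group G and every element of G has the form φ(s)⁻¹·φ(t) with s, t ∈ S. Then every multiplier λ on S extends to a multiplier on G: there exists a multiplier μ : G × G → 𝕋 such that μ(φ(s), φ(t)) = λ(s,t) for all s, t ∈ S. -/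
namespace OreMultExt

universe u v

variable {S : Type u} [Semigroup S]

/-- All data of the problem bundled, so that we can build types depending on it. -/
structure Data (S : Type u) [Semigroup S] : Type u where
  lam : S → S → ℂ
  hnorm : ∀ s t : S, ‖lam s t‖ = 1
  hmult : ∀ r s t : S, lam r s * lam (r * s) t = lam r (s * t) * lam s t
  hcl : ∀ a b c : S, a * b = a * c → b = c
  hcr : ∀ a b c : S, b * a = c * a → b = c
  hore : ∀ s t : S, ∃ u v : S, u * s = v * t
  hne : Nonempty S

noncomputable def Data.s0 (D : Data S) : S := Classical.choice D.hne

/-- The multiplier as a circle-valued function. -/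
def Data.L (D : Data S) (s t : S) : Circle :=
  ⟨D.lam s t, by simpa [Submonoid.unitSphere, mem_sphere_zero_iff_norm] using D.hnorm s t⟩

@[simp] lemma Data.L_coe (D : Data S) (s t : S) : ((D.L s t : Circle) : ℂ) = D.lam s t := rfl

lemma Data.L_mul (D : Data S) (r s t : S) :
    D.L r s * D.L (r * s) t = D.L r (s * t) * D.L s t := by
  ext
  push_cast
  exact D.hmult r s t

lemma Data.lam_ne_zero (D : Data S) (s t : S) : D.lam s t ≠ 0 := fun h => by
  have := D.hnorm s t
  rw [h] at this
  simp at this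

/-- An idempotent in a cancellative semigroup is a (two-sided) identity. -/
lemma Data.idem_mul (D : Data S) {e : S} (h : e * e = e) (x : S) : e * x = x :=
  D.hcl e (e * x) x (by rw [← mul_assoc, h])

lemma Data.mul_idem (D : Data S) {e : S} (h : e * e = e) (x : S) : x * e = x :=
  D.hcr e (x * e) x (by rw [mul_assoc, h])

lemma Data.idem_of_fix (D : Data S) {e x : S} (h : e * x = x) : e * e = e :=
  D.hcr x (e * e) e (by rw [mul_assoc, h, h])

/-- If `e * x = x` then `L e e = L e x`. -/
lemma Data.L_idem (D : Data S) {e x : S} (h : e * x = x) : D.L e e = D.L e x := by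
  have hi : e * e = e := D.idem_of_fix h
  have h2 := D.L_mul e e x
  rw [hi, h] at h2
  exact mul_right_cancel h2

/-- The twisted product semigroup `Circle ×_lam S`. -/
@[ext]
structure Tw (D : Data S) : Type u where
  z : Circle
  s : S

variable {D : Data S}

noncomputable instance : Mul (Tw D) := ⟨fun x y => ⟨x.z * y.z * D.L x.s y.s, x.s * y.s⟩⟩

@[simp] lemma Tw.mul_z (x y : Tw D) : (x * y).z = x.z * y.z * D.L x.s y.s := rfl
@[simp] lemma Tw.mul_s (x y : Tw D) : (x * y).s = x.s * y.s := rfl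

noncomputable instance : Semigroup (Tw D) where
  mul_assoc a b c := by
    ext
    · show ((a.z * b.z * D.L a.s b.s) * c.z * D.L (a.s * b.s) c.s : ℂ)
        = ((a.z * (b.z * c.z * D.L b.s c.s) * D.L a.s (b.s * c.s) : Circle) : ℂ)
      simp only [Circle.coe_mul, Data.L_coe]
      linear_combination (a.z : ℂ) * b.z * c.z * D.hmult a.s b.s c.s
    · exact mul_assoc a.s b.s c.s

/-- The monoid obtained by adjoining a unit. -/
abbrev M (D : Data S) : Type u := WithOne (Tw D)

open OreLocalization in
/-- The Ore propositional condition in `M D`. -/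
lemma oreP (r m : M D) : ∃ v u : M D, u * r = v * m := by
  induction m using WithOne.recOneCoe with
  | one => exact ⟨r, 1, by simp⟩
  | coe b =>
    induction r using WithOne.recOneCoe with
    | one => exact ⟨1, (b : M D), by simp⟩
    | coe a =>
      obtain ⟨p, q, hpq⟩ := D.hore a.s b.s
      refine ⟨((⟨a.z * D.L p a.s * (b.z * D.L q b.s)⁻¹, q⟩ : Tw D) : M D),
        ((⟨1, p⟩ : Tw D) : M D), ?_⟩
      rw [← WithOne.coe_mul, ← WithOne.coe_mul, WithOne.coe_inj]
      refine Tw.ext ?_ hpq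
      show (1 : Circle) * a.z * D.L p a.s
          = a.z * D.L p a.s * (b.z * D.L q b.s)⁻¹ * b.z * D.L q b.s
      group

/-- Weak right cancellation in `M D`. -/
lemma orcP (r₁ r₂ m : M D) (h : r₁ * m = r₂ * m) : ∃ m' : M D, m' * r₁ = m' * r₂ := by
  induction m using WithOne.recOneCoe with
  | one => exact ⟨1, by simpa using h⟩
  | coe b =>
    induction r₁ using WithOne.recOneCoe with
    | one =>
      induction r₂ using WithOne.recOneCoe with
      | one => exact ⟨1, rfl⟩
      | coe a =>
        rw [one_mul, ← WithOne.coe_mul, WithOne.coe_inj] at h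
        have hs : a.s * b.s = b.s := (congrArg Tw.s h).symm
        have hz : b.z = a.z * b.z * D.L a.s b.s := congrArg Tw.z h
        have hone : a.z * D.L a.s b.s = 1 := by
          have h1 : (1 : Circle) * b.z = (a.z * D.L a.s b.s) * b.z := by
            rw [one_mul]
            calc b.z = a.z * b.z * D.L a.s b.s := hz
              _ = a.z * D.L a.s b.s * b.z := mul_right_comm _ _ _
          exact (mul_right_cancel h1).symm
        have hee : D.L a.s a.s = D.L a.s b.s := D.L_idem hs
        have hid : a.s * a.s = a.s := D.idem_of_fix hs
        refine ⟨((⟨1, a.s⟩ : Tw D) : M D), ?_⟩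
        rw [mul_one, ← WithOne.coe_mul, WithOne.coe_inj]
        refine Tw.ext ?_ hid.symm
        show (1 : Circle) = 1 * a.z * D.L a.s a.s
        rw [hee, one_mul, hone]
    | coe a =>
      induction r₂ using WithOne.recOneCoe with
      | one =>
        rw [one_mul, ← WithOne.coe_mul, WithOne.coe_inj] at h
        have hs : a.s * b.s = b.s := congrArg Tw.s h
        have hz : a.z * b.z * D.L a.s b.s = b.z := congrArg Tw.z h
        have hone : a.z * D.L a.s b.s = 1 := by
          have h1 : (a.z * D.L a.s b.s) * b.z = (1 : Circle) * b.z := by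
            rw [one_mul]
            calc a.z * D.L a.s b.s * b.z = a.z * b.z * D.L a.s b.s := mul_right_comm _ _ _
              _ = b.z := hz
          exact mul_right_cancel h1
        have hee : D.L a.s a.s = D.L a.s b.s := D.L_idem hs
        have hid : a.s * a.s = a.s := D.idem_of_fix hs
        refine ⟨((⟨1, a.s⟩ : Tw D) : M D), ?_⟩
        rw [mul_one, ← WithOne.coe_mul, WithOne.coe_inj]
        refine Tw.ext ?_ hid
        show (1 : Circle) * a.z * D.L a.s a.s = 1
        rw [hee, one_mul, hone]
      | coe c =>
        rw [← WithOne.coe_mul, ← WithOne.coe_mul, WithOne.coe_inj] at h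
        have hs : a.s * b.s = c.s * b.s := congrArg Tw.s h
        have hs' : a.s = c.s := D.hcr b.s _ _ hs
        have hz : a.z * b.z * D.L a.s b.s = c.z * b.z * D.L c.s b.s := congrArg Tw.z h
        rw [hs'] at hz
        have hz' : a.z = c.z := by
          have h1 : a.z * (b.z * D.L c.s b.s) = c.z * (b.z * D.L c.s b.s) := by
            rw [← mul_assoc, ← mul_assoc]; exact hz
          exact mul_right_cancel h1
        refine ⟨1, ?_⟩
        rw [one_mul, one_mul, WithOne.coe_inj]
        exact Tw.ext hz' hs'

open OreLocalization in
noncomputable instance : OreSet (⊤ : Submonoid (M D)) where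
  ore_right_cancel r₁ r₂ s h :=
    ⟨⟨Classical.choose (orcP r₁ r₂ s.1 h), trivial⟩,
      Classical.choose_spec (orcP r₁ r₂ s.1 h)⟩
  oreNum r s := Classical.choose (oreP r s.1)
  oreDenom r s := ⟨Classical.choose (Classical.choose_spec (oreP r s.1)), trivial⟩
  ore_eq r s := Classical.choose_spec (Classical.choose_spec (oreP r s.1))

/-- The enveloping group of the twisted semigroup, as an Ore localization. -/
abbrev H (D : Data S) : Type u := OreLocalization (⊤ : Submonoid (M D)) (M D)

open OreLocalization

/-- membership coercion helper -/
def inTop (m : M D) : (⊤ : Submonoid (M D)) := ⟨m, trivial⟩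

@[simp] lemma inTop_coe (m : M D) : ((inTop m : (⊤ : Submonoid (M D))) : M D) = m := rfl

lemma div_decomp (r : M D) (s : (⊤ : Submonoid (M D))) :
    r /ₒ s = ((1 : M D) /ₒ s) * (r /ₒ (1 : (⊤ : Submonoid (M D)))) := by
  rw [OreLocalization.one_div_mul, one_mul]

lemma isUnit_all (x : H D) : IsUnit x := by
  induction x using OreLocalization.ind with
  | c r s =>
    rw [div_decomp]
    exact IsUnit.mul ⟨(numeratorUnit s)⁻¹, rfl⟩ (numerator_isUnit (inTop r))

noncomputable instance : Group (H D) :=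
  { (inferInstance : Monoid (H D)) with
    inv := fun x => ((isUnit_all x).unit⁻¹ : (H D)ˣ)
    inv_mul_cancel := fun x => by
      show ((isUnit_all x).unit⁻¹ : (H D)ˣ) * x = 1
      conv_lhs => rw [← (isUnit_all x).unit_spec]
      exact Units.inv_mul _ }

/-- `nc z s` is the image in `H D` of the pair `(z, s)`. -/
noncomputable def nc (D : Data S) (z : Circle) (s : S) : H D :=
  numeratorHom ((⟨z, s⟩ : Tw D) : M D)

/-- The central copy of the circle in `H D`. -/
noncomputable def cc (D : Data S) (z : Circle) : H D :=
  ((⟨z, D.s0⟩ : Tw D) : M D) /ₒ inTop ((⟨1, D.s0⟩ : Tw D) : M D)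

/-- Equalities in the circle group, proved via `ℂ`. -/
lemma circle_eq {x y : Circle} (h : (x : ℂ) = y) : x = y := Circle.ext h

private lemma chelper1 (a b c d : ℂ) (hb : b ≠ 0) (hd : d ≠ 0) :
    b * c * d⁻¹ * (a * b⁻¹) * d = 1 * a * c := by field_simp

private lemma chelper2 (b c d : ℂ) (hd : d ≠ 0) : b * c * d⁻¹ * 1 * d = 1 * b * c := by
  field_simp

lemma cc_eq (a b : Circle) (s : S) :
    ((⟨a, s⟩ : Tw D) : M D) /ₒ inTop ((⟨b, s⟩ : Tw D) : M D) = cc D (a * b⁻¹) := by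
  rw [cc, oreDiv_eq_iff]
  obtain ⟨p, q, hpq⟩ := D.hore D.s0 s
  have e1 : ((⟨b * D.L q s * (D.L p D.s0)⁻¹, p⟩ : Tw D) : M D) * ((⟨a * b⁻¹, D.s0⟩ : Tw D) : M D)
      = ((⟨1, q⟩ : Tw D) : M D) * ((⟨a, s⟩ : Tw D) : M D) := by
    rw [← WithOne.coe_mul, ← WithOne.coe_mul, WithOne.coe_inj]
    refine Tw.ext ?_ hpq
    apply circle_eq
    show ((b * D.L q s * (D.L p D.s0)⁻¹ * (a * b⁻¹) * D.L p D.s0 : Circle) : ℂ)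
        = ((1 * a * D.L q s : Circle) : ℂ)
    push_cast [Data.L_coe]
    exact chelper1 _ _ _ _ (Circle.coe_ne_zero b) (D.lam_ne_zero p D.s0)
  have e2 : ((⟨b * D.L q s * (D.L p D.s0)⁻¹, p⟩ : Tw D) : M D) * ((⟨1, D.s0⟩ : Tw D) : M D)
      = ((⟨1, q⟩ : Tw D) : M D) * ((⟨b, s⟩ : Tw D) : M D) := by
    rw [← WithOne.coe_mul, ← WithOne.coe_mul, WithOne.coe_inj]
    refine Tw.ext ?_ hpq
    apply circle_eq
    show ((b * D.L q s * (D.L p D.s0)⁻¹ * 1 * D.L p D.s0 : Circle) : ℂ)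
        = ((1 * b * D.L q s : Circle) : ℂ)
    push_cast [Data.L_coe]
    exact chelper2 _ _ _ (D.lam_ne_zero p D.s0)
  exact ⟨⟨((⟨b * D.L q s * (D.L p D.s0)⁻¹, p⟩ : Tw D) : M D), trivial⟩,
    ((⟨1, q⟩ : Tw D) : M D), e1, e2⟩

lemma nc_mul_cc (b z : Circle) (s : S) : nc D b s * cc D z = nc D (b * z) s := by
  have h1 : cc D z = ((⟨b * z, s⟩ : Tw D) : M D) /ₒ inTop ((⟨b, s⟩ : Tw D) : M D) := by
    rw [cc_eq]
    congr 1
    exact (mul_inv_cancel_comm b z).symm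
  rw [h1, nc, nc, numeratorHom_apply, numeratorHom_apply]
  exact OreLocalization.mul_cancel (r := ((⟨b * z, s⟩ : Tw D) : M D))
    (s := inTop ((⟨b, s⟩ : Tw D) : M D)) (t := 1)

lemma nc_mul (z w : Circle) (s t : S) :
    nc D z s * nc D w t = nc D (z * w * D.L s t) (s * t) := by
  rw [nc, nc, nc, ← map_mul, ← WithOne.coe_mul]
  rfl

lemma cc_mul (z w : Circle) : cc D z * cc D w = cc D (z * w) := by
  apply mul_left_cancel (a := nc D 1 D.s0)
  rw [← mul_assoc, nc_mul_cc, nc_mul_cc, nc_mul_cc, one_mul, one_mul]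

lemma cc_one : cc D (1 : Circle) = 1 := by
  apply mul_left_cancel (a := nc D 1 D.s0)
  rw [nc_mul_cc, mul_one, mul_one]

lemma cc_inv (z : Circle) : cc D z⁻¹ = (cc D z)⁻¹ :=
  eq_inv_of_mul_eq_one_left (by rw [cc_mul, inv_mul_cancel, cc_one])

lemma cc_comm (z w : Circle) : cc D z * cc D w = cc D w * cc D z := by
  rw [cc_mul, cc_mul, mul_comm]

lemma cc_comm_nc (z w : Circle) (t : S) : cc D z * nc D w t = nc D w t * cc D z := by
  apply mul_left_cancel (a := nc D 1 D.s0)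
  have hL : nc D 1 D.s0 * (cc D z * nc D w t) = nc D (z * w * D.L D.s0 t) (D.s0 * t) := by
    rw [← mul_assoc, nc_mul_cc, one_mul, nc_mul]
  have hR : nc D 1 D.s0 * (nc D w t * cc D z) = nc D (1 * w * D.L D.s0 t * z) (D.s0 * t) := by
    rw [← mul_assoc, nc_mul, nc_mul_cc]
  rw [hL, hR]
  congr 1
  apply circle_eq
  push_cast [Data.L_coe]
  ring

lemma cc_comm_all (z : Circle) (x : H D) : cc D z * x = x * cc D z := by
  have hN : ∀ m : M D, Commute (cc D z) (numeratorHom m : H D) := by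
    intro m
    induction m using WithOne.recOneCoe with
    | one => rw [map_one]; exact Commute.one_right _
    | coe a => exact cc_comm_nc z a.z a.s
  induction x using OreLocalization.ind with
  | c r s =>
    have h1 : Commute (cc D z) ((numeratorUnit s : (H D)ˣ) : H D) := hN s.1
    have h2 : Commute (cc D z) (((numeratorUnit s)⁻¹ : (H D)ˣ) : H D) := h1.units_inv_right
    rw [div_decomp]
    exact (Commute.mul_right h2 (hN r)).eq

lemma withone_cases (m : M D) : m = 1 ∨ ∃ a : Tw D, m = a := by
  induction m using WithOne.recOneCoe with
  | one => exact Or.inl rfl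
  | coe a => exact Or.inr ⟨a, rfl⟩

lemma cc_inj {z w : Circle} (h : cc D z = cc D w) : z = w := by
  rw [cc, cc, oreDiv_eq_iff] at h
  obtain ⟨u, v, h1, h2⟩ := h
  simp only [Submonoid.smul_def, smul_eq_mul, inTop_coe] at h1 h2
  rcases withone_cases (u : M D) with hu | ⟨a, hu⟩ <;> rw [hu] at h1 h2
  · rcases withone_cases v with hv | ⟨b, hv⟩ <;> rw [hv] at h1 h2
    · simp only [one_mul, ← WithOne.coe_mul, WithOne.coe_inj] at h1
      exact (congrArg Tw.z h1).symm
    · simp only [inTop_coe, one_mul, ← WithOne.coe_mul, WithOne.coe_inj] at h1 h2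
      have h1z := congrArg Tw.z h1
      have h2z := congrArg Tw.z h2
      simp only [Tw.mul_z] at h1z h2z
      have hw : w = z * (b.z * 1 * D.L b.s D.s0) := by
        rw [h1z]; apply circle_eq; push_cast; ring
      rw [← h2z, mul_one] at hw
      exact hw.symm
  · rcases withone_cases v with hv | ⟨b, hv⟩ <;> rw [hv] at h1 h2
    · simp only [inTop_coe, one_mul, ← WithOne.coe_mul, WithOne.coe_inj] at h1 h2
      have h1z := congrArg Tw.z h1
      have h2z := congrArg Tw.z h2
      simp only [Tw.mul_z] at h1z h2z
      have hw : z = w * (a.z * 1 * D.L a.s D.s0) := by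
        rw [← h1z]; apply circle_eq; push_cast; ring
      rw [h2z, mul_one] at hw
      exact hw
    · simp only [inTop_coe, ← WithOne.coe_mul, WithOne.coe_inj] at h1 h2
      have hs2 := congrArg Tw.s h2
      simp only [Tw.mul_s] at hs2
      have hs : a.s = b.s := D.hcr D.s0 _ _ hs2
      have h2z := congrArg Tw.z h2
      have h1z := congrArg Tw.z h1
      simp only [Tw.mul_z] at h2z h1z
      rw [hs] at h2z h1z
      have hz : a.z = b.z := by
        have h3 := mul_right_cancel h2z
        rwa [mul_one, mul_one] at h3
      rw [hz] at h1z
      exact (mul_left_cancel (mul_right_cancel h1z)).symm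

section Gpart

variable {G : Type v} [Group G] (φ : S →ₙ* G)

/-- The projection `M D →* G`. -/
noncomputable def fM (D : Data S) (φ : S →ₙ* G) : M D →* G :=
  WithOne.lift ⟨fun x => φ x.s, fun a b => map_mul φ a.s b.s⟩

@[simp] lemma fM_coe (a : Tw D) : fM D φ (a : M D) = φ a.s := by
  simp [fM]

/-- The projection `H D →* G`. -/
noncomputable def piH (D : Data S) (φ : S →ₙ* G) : H D →* G :=
  universalMulHom (fM D φ)
    ((toUnits : G ≃* Gˣ).toMonoidHom.comp ((fM D φ).comp (⊤ : Submonoid (M D)).subtype))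
    (fun _ => by simp)

lemma piH_nc (z : Circle) (s : S) : piH D φ (nc D z s) = φ s := by
  rw [nc, piH, universalMulHom_commutes]
  exact fM_coe φ _

lemma piH_cc (z : Circle) : piH D φ (cc D z) = 1 := by
  rw [cc, piH, universalMulHom_apply]
  simp [inTop_coe]

lemma ker_rep (hinj : Function.Injective φ) (x : H D) (hx : piH D φ x = 1) :
    ∃ z : Circle, x = cc D z := by
  induction x using OreLocalization.ind with
  | c r s =>
    obtain ⟨ms, hms⟩ := s
    have hinv : ((numeratorHom ms : H D))⁻¹
        = (1 : M D) /ₒ (⟨ms, hms⟩ : (⊤ : Submonoid (M D))) :=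
      inv_eq_of_mul_eq_one_left
        (OreLocalization.mul_inv (1 : (⊤ : Submonoid (M D))) ⟨ms, hms⟩)
    have hxeq : r /ₒ (⟨ms, hms⟩ : (⊤ : Submonoid (M D)))
        = (numeratorHom ms : H D)⁻¹ * numeratorHom r := by
      rw [hinv, numeratorHom_apply, div_decomp]
    rw [hxeq] at hx ⊢
    have idem : ∀ a : Tw D, φ a.s = 1 → ∃ z : Circle, (numeratorHom (a : M D) : H D) = cc D z := by
      intro a ha
      have he : a.s * a.s = a.s := by
        apply hinj
        rw [map_mul, ha, one_mul]
      have hne : nc D 1 a.s = cc D (D.L a.s a.s) := by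
        apply mul_left_cancel (a := nc D 1 a.s)
        simp only [nc_mul, nc_mul_cc, he, one_mul]
      refine ⟨D.L a.s a.s * a.z, ?_⟩
      have h0 : (numeratorHom (a : M D) : H D) = nc D a.z a.s := rfl
      rw [h0, ← one_mul a.z, ← nc_mul_cc, hne, cc_mul, one_mul]
    rcases withone_cases ms with rfl | ⟨a, rfl⟩
    · rw [map_one, inv_one, one_mul] at hx ⊢
      rcases withone_cases r with rfl | ⟨a, rfl⟩
      · exact ⟨1, by rw [map_one, cc_one]⟩
      · apply idem a
        rw [show (numeratorHom (a : M D) : H D) = nc D a.z a.s from rfl, piH_nc] at hx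
        exact hx
    · rcases withone_cases r with rfl | ⟨b, rfl⟩
      · rw [map_one, mul_one] at hx ⊢
        rw [map_inv, show (numeratorHom (a : M D) : H D) = nc D a.z a.s from rfl, piH_nc,
          inv_eq_one] at hx
        obtain ⟨z, hz⟩ := idem a hx
        exact ⟨z⁻¹, by rw [hz, cc_inv]⟩
      · have hst : a.s = b.s := by
          apply hinj
          rw [map_mul, map_inv, show (numeratorHom (a : M D) : H D) = nc D a.z a.s from rfl,
            show (numeratorHom (b : M D) : H D) = nc D b.z b.s from rfl, piH_nc, piH_nc,
            inv_mul_eq_one] at hx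
          exact hx
        refine ⟨a.z⁻¹ * b.z, ?_⟩
        have h1 : (numeratorHom (b : M D) : H D)
            = numeratorHom (a : M D) * cc D (a.z⁻¹ * b.z) := by
          show nc D b.z b.s = nc D a.z a.s * cc D (a.z⁻¹ * b.z)
          rw [nc_mul_cc, mul_inv_cancel_left, hst]
        rw [h1, inv_mul_cancel_left]

/-- A section of `piH` over `G`, sending `φ s` to `nc 1 s`. -/
noncomputable def sig (D : Data S) (φ : S →ₙ* G)
    (hgen : ∀ g : G, ∃ s t : S, g = (φ s)⁻¹ * φ t) (g : G) : H D :=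
  @dite (H D) (∃ u : S, φ u = g) (Classical.dec _) (fun h => nc D 1 h.choose)
    (fun _ => (nc D 1 (hgen g).choose)⁻¹ * nc D 1 (hgen g).choose_spec.choose)

variable (hgen : ∀ g : G, ∃ s t : S, g = (φ s)⁻¹ * φ t)

lemma piH_sig (g : G) : piH D φ (sig D φ hgen g) = g := by
  rw [sig]
  split_ifs with h
  · rw [piH_nc]; exact h.choose_spec
  · rw [map_mul, map_inv, piH_nc, piH_nc]
    exact (hgen g).choose_spec.choose_spec.symm

lemma sig_phi (hinj : Function.Injective φ) (s : S) : sig D φ hgen (φ s) = nc D 1 s := by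
  rw [sig, dif_pos ⟨s, rfl⟩]
  congr 1
  exact hinj (⟨s, rfl⟩ : ∃ u : S, φ u = φ s).choose_spec

lemma exists_mu (hinj : Function.Injective φ) (g h : G) :
    ∃ z : Circle, sig D φ hgen g * sig D φ hgen h = cc D z * sig D φ hgen (g * h) := by
  have hx : piH D φ (sig D φ hgen g * sig D φ hgen h * (sig D φ hgen (g * h))⁻¹) = 1 := by
    rw [map_mul, map_mul, map_inv, piH_sig, piH_sig, piH_sig, mul_inv_cancel]
  obtain ⟨z, hz⟩ := ker_rep φ hinj _ hx
  exact ⟨z, by rw [← mul_inv_eq_iff_eq_mul.mp hz]⟩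

/-- The extended multiplier, as a circle-valued map. -/
noncomputable def mu0 (D : Data S) (φ : S →ₙ* G)
    (hgen : ∀ g : G, ∃ s t : S, g = (φ s)⁻¹ * φ t)
    (hinj : Function.Injective φ) (g h : G) : Circle :=
  (exists_mu (D := D) φ hgen hinj g h).choose

lemma mu0_spec (hinj : Function.Injective φ) (g h : G) :
    sig D φ hgen g * sig D φ hgen h
      = cc D (mu0 D φ hgen hinj g h) * sig D φ hgen (g * h) :=
  (exists_mu (D := D) φ hgen hinj g h).choose_spec

lemma mu0_cocycle (hinj : Function.Injective φ) (g h k : G) :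
    mu0 D φ hgen hinj g h * mu0 D φ hgen hinj (g * h) k
      = mu0 D φ hgen hinj g (h * k) * mu0 D φ hgen hinj h k := by
  apply cc_inj (D := D)
  rw [← cc_mul, ← cc_mul]
  apply mul_right_cancel (b := sig D φ hgen (g * h * k))
  have lhs : cc D (mu0 D φ hgen hinj g h) * cc D (mu0 D φ hgen hinj (g * h) k)
        * sig D φ hgen (g * h * k)
      = sig D φ hgen g * sig D φ hgen h * sig D φ hgen k := by
    rw [mul_assoc, ← mu0_spec φ hgen hinj (g * h) k, ← mul_assoc,
      ← mu0_spec φ hgen hinj g h]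
  have rhs : cc D (mu0 D φ hgen hinj g (h * k)) * cc D (mu0 D φ hgen hinj h k)
        * sig D φ hgen (g * h * k)
      = sig D φ hgen g * sig D φ hgen h * sig D φ hgen k := by
    rw [mul_assoc g h k]
    calc cc D (mu0 D φ hgen hinj g (h * k)) * cc D (mu0 D φ hgen hinj h k)
          * sig D φ hgen (g * (h * k))
        = cc D (mu0 D φ hgen hinj h k) * (cc D (mu0 D φ hgen hinj g (h * k))
          * sig D φ hgen (g * (h * k))) := by
          rw [cc_comm, mul_assoc]
      _ = cc D (mu0 D φ hgen hinj h k) * (sig D φ hgen g * sig D φ hgen (h * k)) := by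
          rw [← mu0_spec φ hgen hinj g (h * k)]
      _ = sig D φ hgen g * (cc D (mu0 D φ hgen hinj h k) * sig D φ hgen (h * k)) := by
          rw [← mul_assoc, cc_comm_all, mul_assoc]
      _ = sig D φ hgen g * (sig D φ hgen h * sig D φ hgen k) := by
          rw [← mu0_spec φ hgen hinj h k]
      _ = sig D φ hgen g * sig D φ hgen h * sig D φ hgen k := by
          rw [mul_assoc]
  rw [lhs, rhs]

lemma mu0_phi (hinj : Function.Injective φ) (s t : S) :
    mu0 D φ hgen hinj (φ s) (φ t) = D.L s t := by
  apply cc_inj (D := D)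
  apply mul_right_cancel (b := sig D φ hgen (φ s * φ t))
  rw [← mu0_spec φ hgen hinj]
  have h1 : φ s * φ t = φ (s * t) := (map_mul φ s t).symm
  rw [sig_phi φ hgen hinj, sig_phi φ hgen hinj, h1, sig_phi φ hgen hinj,
    nc_mul, one_mul, one_mul, cc_comm_nc, nc_mul_cc, one_mul]

end Gpart
end OreMultExt

/-- **Extension of multipliers from an Ore semigroup to its enveloping group.**
Let `S` be an Ore semigroup with enveloping group `(G, φ)`.  Then every
circle-valued multiplier `lam` on `S` extends to a multiplier `μ` on `G`, i.e.
`μ (φ s) (φ t) = lam s t` for all `s t ∈ S`. -/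
theorem ore_multiplier_extends {S : Type u} [Semigroup S]
    (hcancel_left : ∀ a b c : S, a * b = a * c → b = c)
    (hcancel_right : ∀ a b c : S, b * a = c * a → b = c)
    (hOre : ∀ s t : S, ∃ u v : S, u * s = v * t)
    {G : Type v} [Group G] (φ : S →ₙ* G)
    (hinj : Function.Injective φ)
    (hgen : ∀ g : G, ∃ s t : S, g = (φ s)⁻¹ * φ t)
    (lam : S → S → ℂ)
    (hlam_norm : ∀ s t : S, ‖lam s t‖ = 1)
    (hlam_mult : ∀ r s t : S, lam r s * lam (r * s) t = lam r (s * t) * lam s t) :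
    ∃ μ : G → G → ℂ,
      (∀ g h : G, ‖μ g h‖ = 1) ∧
      (∀ g h k : G, μ g h * μ (g * h) k = μ g (h * k) * μ h k) ∧
      (∀ s t : S, μ (φ s) (φ t) = lam s t) := by
  have hne : Nonempty S := by
    obtain ⟨s, t, -⟩ := hgen 1
    exact ⟨s⟩
  let D : OreMultExt.Data S :=
    ⟨lam, hlam_norm, hlam_mult, hcancel_left, hcancel_right, hOre, hne⟩
  refine ⟨fun g h => ((OreMultExt.mu0 D φ hgen hinj g h : Circle) : ℂ), ?_, ?_, ?_⟩
  · intro g h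
    simp [Circle.norm_coe]
  · intro g h k
    have hco := OreMultExt.mu0_cocycle (D := D) φ hgen hinj g h k
    beta_reduce
    rw [← Circle.coe_mul, ← Circle.coe_mul, hco]
  · intro s t
    have hres := OreMultExt.mu0_phi (D := D) φ hgen hinj s t
    exact congrArg (fun z : Circle => (z : ℂ)) hres
end

section
/- Let S be an Ore semigroup with enveloping group (G, φ), i.e. φ : S → G is an injective semigroup homomorphism into the group G and every element of G has the form φ(s)⁻¹·φ(t) with s, t ∈ S. Let μ be a multiplier on G whose restriction to S is a coboundary, i.e. there exists f : S → 𝕋 with μ(φ(s), φ(t)) = f(s)·f(t)·conj(f(st)) for all s, t ∈ S. Then μ is a coboundary on G: there exists F : G → 𝕋 with μ(g,h) = F(g)·F(h)·conj(F(gh)) for all g, h ∈ G. -/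
universe u v

/-- Auxiliary type synonym carrying the central extension `𝕋 ×_μ G`. -/
structure OreCentralExt (G : Type v) : Type v where
  z : Circle
  g : G

set_option maxHeartbeats 1600000 in
/-- **Multipliers on the enveloping group whose restriction to the Ore semigroup
is a coboundary are themselves coboundaries.**
Let `S` be an Ore semigroup with enveloping group `(G, φ)` and let `μ` be a
multiplier on `G`.  If there is `f : S → 𝕋` with
`μ (φ s) (φ t) = f s * f t * conj (f (s*t))` for all `s t ∈ S`, then there is
`F : G → 𝕋` with `μ g h = F g * F h * conj (F (g*h))` for all `g h ∈ G`. -/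
theorem ore_multiplier_coboundary_extends {S : Type u} [Semigroup S]
    (hcancel_left : ∀ a b c : S, a * b = a * c → b = c)
    (hcancel_right : ∀ a b c : S, b * a = c * a → b = c)
    (hOre : ∀ s t : S, ∃ u v : S, u * s = v * t)
    {G : Type v} [Group G] (φ : S →ₙ* G)
    (hinj : Function.Injective φ)
    (hgen : ∀ g : G, ∃ s t : S, g = (φ s)⁻¹ * φ t)
    (μ : G → G → ℂ)
    (hμ_norm : ∀ g h : G, ‖μ g h‖ = 1)
    (hμ_mult : ∀ g h k : G, μ g h * μ (g * h) k = μ g (h * k) * μ h k)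
    (f : S → ℂ)
    (hf_norm : ∀ s : S, ‖f s‖ = 1)
    (hf_cob : ∀ s t : S, μ (φ s) (φ t) = f s * f t * star (f (s * t))) :
    ∃ F : G → ℂ,
      (∀ g : G, ‖F g‖ = 1) ∧
      (∀ g h : G, μ g h = F g * F h * star (F (g * h))) := by
  classical
  have hstar : ∀ z : ℂ, ‖z‖ = 1 → star z * z = 1 := by
    intro z hz
    rw [Complex.star_def, mul_comm, Complex.mul_conj, Complex.normSq_eq_norm_sq,
      hz]
    norm_num
  have hμ0 : ∀ g h : G, μ g h ≠ 0 := by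
    intro g h he
    have := hμ_norm g h
    rw [he] at this
    simp at this
  -- μ as a Circle-valued function
  set ν : G → G → Circle := fun g h => ⟨μ g h, mem_sphere_zero_iff_norm.2 (hμ_norm g h)⟩ with hν
  have hν_coe : ∀ g h : G, ((ν g h : Circle) : ℂ) = μ g h := fun _ _ => rfl
  have hν_mult : ∀ g h k : G, ν g h * ν (g * h) k = ν g (h * k) * ν h k := by
    intro g h k; apply Circle.ext; push_cast [hν]; exact hμ_mult g h k
  have hν1 : ∀ g : G, ν 1 g = ν 1 1 := by
    intro g
    have h' : ν 1 1 * ν 1 g = ν 1 g * ν 1 g := by simpa using hν_mult 1 1 g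
    exact (mul_right_cancel h').symm
  have hν1' : ∀ g : G, ν g 1 = ν 1 1 := by
    intro g
    have h' : ν g 1 * ν g 1 = ν g 1 * ν 1 1 := by simpa using hν_mult g 1 1
    exact mul_left_cancel h'
  have hνinv : ∀ g : G, ν g⁻¹ g = ν g g⁻¹ := by
    intro g
    have h' := hν_mult g g⁻¹ g
    rw [mul_inv_cancel, inv_mul_cancel, hν1, hν1' g] at h'
    exact mul_left_cancel (a := ν 1 1) (h'.symm.trans (mul_comm _ _))
  have hinv_helper : ∀ a b c : ℂ, a ≠ 0 → b ≠ 0 → c ≠ 0 →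
      a⁻¹ * b⁻¹ * c⁻¹ * a * c = b⁻¹ := by
    intro a b c ha hb hc
    field_simp
  have hone_helper : ∀ a b : ℂ, b ≠ 0 → b⁻¹ * a * b = a := by
    intro a b hb
    field_simp
  -- the central extension group structure on `OreCentralExt G`
  letI : Mul (OreCentralExt G) :=
    ⟨fun a b => ⟨a.z * b.z * ν a.g b.g, a.g * b.g⟩⟩
  letI : One (OreCentralExt G) := ⟨⟨(ν 1 1)⁻¹, 1⟩⟩
  letI : Inv (OreCentralExt G) :=
    ⟨fun a => ⟨a.z⁻¹ * (ν 1 1)⁻¹ * (ν a.g a.g⁻¹)⁻¹, a.g⁻¹⟩⟩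
  have hmul : ∀ a b : OreCentralExt G,
      a * b = ⟨a.z * b.z * ν a.g b.g, a.g * b.g⟩ := fun _ _ => rfl
  have hone : (1 : OreCentralExt G) = ⟨(ν 1 1)⁻¹, 1⟩ := rfl
  have hinv' : ∀ a : OreCentralExt G,
      a⁻¹ = ⟨a.z⁻¹ * (ν 1 1)⁻¹ * (ν a.g a.g⁻¹)⁻¹, a.g⁻¹⟩ := fun _ => rfl
  letI : Group (OreCentralExt G) := Group.ofLeftAxioms
    (by
      rintro ⟨az, ag⟩ ⟨bz, bg⟩ ⟨cz, cg⟩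
      simp only [hmul]
      congr 1
      · apply Circle.ext
        have h := congrArg (fun z : Circle => (z : ℂ)) (hν_mult ag bg cg)
        simp only [Circle.coe_mul, hν_coe] at h
        simp only [Circle.coe_mul, hν_coe]
        linear_combination ((az : ℂ) * bz * cz) * h
      · exact mul_assoc _ _ _)
    (by
      rintro ⟨az, ag⟩
      simp only [hmul, hone]
      congr 1
      · rw [hν1 ag]
        apply Circle.ext
        simp only [Circle.coe_mul, Circle.coe_inv, hν_coe]
        exact hone_helper _ _ (hμ0 1 1)
      · exact one_mul _)
    (by
      rintro ⟨az, ag⟩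
      simp only [hmul, hinv', hone]
      congr 1
      · rw [hνinv ag]
        apply Circle.ext
        simp only [Circle.coe_mul, Circle.coe_inv, hν_coe]
        exact hinv_helper _ _ _ (Circle.coe_ne_zero az) (hμ0 1 1) (hμ0 _ _)
      · exact inv_mul_cancel _)
  -- the section over the semigroup
  set σ : S → OreCentralExt G := fun s =>
    ⟨⟨star (f s), mem_sphere_zero_iff_norm.2 (by rw [norm_star]; exact hf_norm s)⟩, φ s⟩
    with hσ
  have hσz : ∀ s : S, ((σ s).z : ℂ) = star (f s) := fun _ => rfl
  have hσg : ∀ s : S, (σ s).g = φ s := fun _ => rfl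
  have σ_mul : ∀ s t : S, σ s * σ t = σ (s * t) := by
    intro s t
    rw [hmul]
    congr 1
    · apply Circle.ext
      simp only [Circle.coe_mul, hσz, hσg, hν_coe]
      rw [hf_cob]
      have h1 := hstar (f s) (hf_norm s)
      have h2 := hstar (f t) (hf_norm t)
      linear_combination (star (f t) * f t * star (f (s * t))) * h1 +
        star (f (s * t)) * h2
    · exact (map_mul φ s t).symm
  -- the key well-definedness lemma
  have welldef : ∀ s t s' t' : S, (φ s)⁻¹ * φ t = (φ s')⁻¹ * φ t' →
      (σ s)⁻¹ * σ t = (σ s')⁻¹ * σ t' := by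
    intro s t s' t' h
    obtain ⟨u, v, huv⟩ := hOre s s'
    have e1 : φ u * φ s = φ v * φ s' := by rw [← map_mul, ← map_mul, huv]
    have e2 : φ (u * t) = φ (v * t') := by
      rw [map_mul, map_mul]
      calc φ u * φ t = (φ u * φ s) * ((φ s)⁻¹ * φ t) := by group
        _ = (φ v * φ s') * ((φ s')⁻¹ * φ t') := by rw [e1, h]
        _ = φ v * φ t' := by group
    have h2 : u * t = v * t' := hinj e2
    calc (σ s)⁻¹ * σ t = (σ u * σ s)⁻¹ * (σ u * σ t) := by group
      _ = (σ (u * s))⁻¹ * σ (u * t) := by rw [σ_mul, σ_mul]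
      _ = (σ (v * s'))⁻¹ * σ (v * t') := by rw [huv, h2]
      _ = (σ v * σ s')⁻¹ * (σ v * σ t') := by rw [σ_mul, σ_mul]
      _ = (σ s')⁻¹ * σ t' := by group
  -- the splitting map
  have hgenS : ∀ g : G, ∃ p : S × S, g = (φ p.1)⁻¹ * φ p.2 := by
    intro g; obtain ⟨s, t, h⟩ := hgen g; exact ⟨⟨s, t⟩, h⟩
  set sg : G → S := fun g => (hgenS g).choose.1 with hsg
  set tg : G → S := fun g => (hgenS g).choose.2 with htg
  have spec : ∀ g : G, g = (φ (sg g))⁻¹ * φ (tg g) := fun g => (hgenS g).choose_spec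
  set ρ : G → OreCentralExt G := fun g => (σ (sg g))⁻¹ * σ (tg g) with hρ
  have hg_mul : ∀ a b : OreCentralExt G, (a * b).g = a.g * b.g := fun _ _ => rfl
  have hg_inv : ∀ a : OreCentralExt G, (a⁻¹).g = a.g⁻¹ := fun _ => rfl
  have hρg : ∀ g : G, (ρ g).g = g := by
    intro g
    rw [hρ]
    simp only [hg_mul, hg_inv, hσg]
    exact (spec g).symm
  have ρ_mul : ∀ g h : G, ρ g * ρ h = ρ (g * h) := by
    intro g h
    obtain ⟨u, v, huv⟩ := hOre (tg g) (sg h)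
    have e1 : ρ g = (σ (u * sg g))⁻¹ * σ (u * tg g) := by
      rw [hρ]
      refine welldef _ _ _ _ ?_
      rw [map_mul, map_mul]
      group
    have e2 : ρ h = (σ (v * sg h))⁻¹ * σ (v * tg h) := by
      rw [hρ]
      refine welldef _ _ _ _ ?_
      rw [map_mul, map_mul]
      group
    have em2 : φ u * φ (tg g) = φ v * φ (sg h) := by
      rw [← map_mul, ← map_mul, huv]
    have e3 : g * h = (φ (u * sg g))⁻¹ * φ (v * tg h) := by
      conv_lhs => rw [spec g, spec h]
      rw [map_mul, map_mul]
      calc (φ (sg g))⁻¹ * φ (tg g) * ((φ (sg h))⁻¹ * φ (tg h))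
          = (φ u * φ (sg g))⁻¹ * ((φ u * φ (tg g)) * (φ v * φ (sg h))⁻¹) *
            (φ v * φ (tg h)) := by group
        _ = (φ u * φ (sg g))⁻¹ * (φ v * φ (tg h)) := by
            rw [em2]
            group
    calc ρ g * ρ h = (σ (u * sg g))⁻¹ * (σ (u * tg g) * (σ (v * sg h))⁻¹) *
          σ (v * tg h) := by rw [e1, e2]; group
      _ = (σ (u * sg g))⁻¹ * σ (v * tg h) := by
          rw [show σ (u * tg g) = σ (v * sg h) by rw [huv]]
          group
      _ = ρ (g * h) := by
          rw [hρ]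
          exact (welldef _ _ _ _ ((spec (g * h)).symm.trans e3)).symm
  -- read off the coboundary
  have key : ∀ g h : G, (ρ g).z * (ρ h).z * ν g h = (ρ (g * h)).z := by
    intro g h
    have hz := congrArg OreCentralExt.z (ρ_mul g h)
    rw [hmul] at hz
    simpa only [hρg] using hz
  have hρz_norm : ∀ g : G, ‖(((ρ g).z : Circle) : ℂ)‖ = 1 := by
    intro g
    exact Circle.norm_coe _
  refine ⟨fun g => star (((ρ g).z : Circle) : ℂ), ?_, ?_⟩
  · intro g
    rw [norm_star]
    exact hρz_norm g
  · intro g h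
    have hk := congrArg (fun z : Circle => (z : ℂ)) (key g h)
    simp only [Circle.coe_mul, hν_coe] at hk
    have ha := hstar _ (hρz_norm g)
    have hb := hstar _ (hρz_norm h)
    simp only [star_star]
    set A := (((ρ g).z : Circle) : ℂ) with hA
    set B := (((ρ h).z : Circle) : ℂ) with hB
    set C := (((ρ (g * h)).z : Circle) : ℂ) with hC
    linear_combination star A * star B * hk - (star B * B * μ g h) * ha - μ g h * hb
end

section
/- Let S be an Ore semigroup with enveloping group (G, φ), let λ be a multiplier on S, let {V_s : s ∈ S} be an isometric λ-representation of S on a complex Hilbert space H, and let μ be a multiplier on G with μ(φ(s), φ(t)) = λ(s,t) for all s, t ∈ S. Suppose (𝓗, j, U) and (𝓗', j', U') are both minimal unitary dilations of V with multiplier μ, i.e. for each of them: j (resp. j') is a linear isometry of H into the Hilbert space, U (resp. U') is a unitary μ-representation of G on it, U_{φ(s)} (j h) = j (V_s h) for all s ∈ S and h ∈ H, and ⋃_{s ∈ S} U_{φ(s)}*(j(H)) is dense. Then there exists a unitary operator W : 𝓗 → 𝓗' such that W ∘ j = j' and W U_g = U'_g W for every g ∈ G. -/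
open ContinuousLinearMap

open scoped InnerProductSpace

section Aux

variable {S : Type u} [Semigroup S] {G : Type v} [Group G] (φ : S →ₙ* G)
  (μ : G → G → ℂ)
  {H : Type} [NormedAddCommGroup H] [InnerProductSpace ℂ H] [CompleteSpace H]
  (V : S → H →L[ℂ] H)
  {K : Type*} [NormedAddCommGroup K] [InnerProductSpace ℂ K] [CompleteSpace K]
  (j : H →ₗᵢ[ℂ] K) (U : G → K →L[ℂ] K)

set_option linter.unusedSectionVars false

lemma aux_adj_inner (hU : ∀ g : G, U g ∘L adjoint (U g) = 1) (g : G) (x y : K) :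
    ⟪adjoint (U g) x, adjoint (U g) y⟫_ℂ = ⟪x, y⟫_ℂ := by
  rw [adjoint_inner_left, ← comp_apply, hU g, one_apply_eq_self]

lemma aux_adj_comp (hrep : ∀ g h : G, U g ∘L U h = μ g h • U (g * h)) (s t : S) :
    adjoint (U (φ t)) ∘L adjoint (U (φ s))
      = (starRingEnd ℂ) (μ (φ s) (φ t)) • adjoint (U (φ (s * t))) := by
  rw [← adjoint_comp, hrep, ← φ.map_mul]
  simp [map_smulₛₗ]

lemma aux_shift (hU1 : ∀ g : G, adjoint (U g) ∘L U g = 1)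
    (hrep : ∀ g h : G, U g ∘L U h = μ g h • U (g * h))
    (hdil : ∀ (s : S) (h : H), U (φ s) (j h) = j (V s h)) (u s : S) (h : H) :
    adjoint (U (φ s)) (j h)
      = (starRingEnd ℂ) (μ (φ u) (φ s)) • adjoint (U (φ (u * s))) (j (V u h)) := by
  have h1 : adjoint (U (φ s)) ∘L adjoint (U (φ u))
      = (starRingEnd ℂ) (μ (φ u) (φ s)) • adjoint (U (φ (u * s))) := by
    rw [← adjoint_comp, hrep, ← φ.map_mul]
    simp [map_smulₛₗ]
  calc adjoint (U (φ s)) (j h)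
      = adjoint (U (φ s)) (adjoint (U (φ u)) (U (φ u) (j h))) := by
        rw [← comp_apply (adjoint (U (φ u))), hU1, one_apply_eq_self]
    _ = (adjoint (U (φ s)) ∘L adjoint (U (φ u))) (U (φ u) (j h)) := rfl
    _ = (starRingEnd ℂ) (μ (φ u) (φ s)) • adjoint (U (φ (u * s))) (j (V u h)) := by
        rw [h1, hdil]; rfl

lemma aux_inner (hU : ∀ g : G, U g ∘L adjoint (U g) = 1)
    (hU1 : ∀ g : G, adjoint (U g) ∘L U g = 1)
    (hrep : ∀ g h : G, U g ∘L U h = μ g h • U (g * h))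
    (hdil : ∀ (s : S) (h : H), U (φ s) (j h) = j (V s h))
    {u v s t : S} (huv : u * s = v * t) (h k : H) :
    ⟪adjoint (U (φ s)) (j h), adjoint (U (φ t)) (j k)⟫_ℂ
      = μ (φ u) (φ s) * (starRingEnd ℂ) (μ (φ v) (φ t)) * ⟪V u h, V v k⟫_ℂ := by
  rw [aux_shift φ μ V j U hU1 hrep hdil u s h, aux_shift φ μ V j U hU1 hrep hdil v t k,
    huv, inner_smul_left, inner_smul_right,
    aux_adj_inner U hU (φ (v * t)), j.inner_map_map, Complex.conj_conj]
  ring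

lemma aux_U_on_gen (hμ_norm : ∀ g h : G, ‖μ g h‖ = 1)
    (hU : ∀ g : G, U g ∘L adjoint (U g) = 1)
    (hU1 : ∀ g : G, adjoint (U g) ∘L U g = 1)
    (hrep : ∀ g h : G, U g ∘L U h = μ g h • U (g * h))
    (hdil : ∀ (s : S) (h : H), U (φ s) (j h) = j (V s h))
    {u v s t : S} (huv : u * s = v * t) (h : H) :
    U (φ t) (adjoint (U (φ s)) (j h))
      = ((starRingEnd ℂ) (μ (φ u) (φ s)) * μ (φ v) (φ t)) • adjoint (U (φ v)) (j (V u h)) := by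
  have hμ : μ (φ v) (φ t) * (starRingEnd ℂ) (μ (φ v) (φ t)) = 1 := by
    rw [Complex.mul_conj]
    norm_cast
    rw [Complex.normSq_eq_norm_sq, hμ_norm]
    norm_num
  have h2 := aux_adj_comp φ μ U hrep v t
  have h3 : U (φ t) ∘L adjoint (U (φ (v * t))) = μ (φ v) (φ t) • adjoint (U (φ v)) := by
    have h4 : adjoint (U (φ (v * t)))
        = μ (φ v) (φ t) • (adjoint (U (φ t)) ∘L adjoint (U (φ v))) := by
      rw [h2, smul_smul, hμ, one_smul]
    rw [h4, comp_smul, ← comp_assoc, hU, one_def, id_comp]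
  calc U (φ t) (adjoint (U (φ s)) (j h))
      = U (φ t) ((starRingEnd ℂ) (μ (φ u) (φ s)) • adjoint (U (φ (v * t))) (j (V u h))) := by
        rw [aux_shift φ μ V j U hU1 hrep hdil u s h, huv]
    _ = (starRingEnd ℂ) (μ (φ u) (φ s)) • (U (φ t) ∘L adjoint (U (φ (v * t)))) (j (V u h)) := by
        rw [map_smul]; rfl
    _ = ((starRingEnd ℂ) (μ (φ u) (φ s)) * μ (φ v) (φ t)) • adjoint (U (φ v)) (j (V u h)) := by
        rw [h3, smul_apply, smul_smul]

lemma exists_W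
    (hOre : ∀ s t : S, ∃ u v : S, u * s = v * t)
    {K' : Type*} [NormedAddCommGroup K'] [InnerProductSpace ℂ K'] [CompleteSpace K']
    (j' : H →ₗᵢ[ℂ] K') (U' : G → K' →L[ℂ] K')
    (hU : ∀ g : G, U g ∘L adjoint (U g) = 1)
    (hU1 : ∀ g : G, adjoint (U g) ∘L U g = 1)
    (hrep : ∀ g h : G, U g ∘L U h = μ g h • U (g * h))
    (hdil : ∀ (s : S) (h : H), U (φ s) (j h) = j (V s h))
    (hmin : Dense (⋃ s : S, adjoint (U (φ s)) '' Set.range j))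
    (hU' : ∀ g : G, U' g ∘L adjoint (U' g) = 1)
    (hU1' : ∀ g : G, adjoint (U' g) ∘L U' g = 1)
    (hrep' : ∀ g h : G, U' g ∘L U' h = μ g h • U' (g * h))
    (hdil' : ∀ (s : S) (h : H), U' (φ s) (j' h) = j' (V s h)) :
    ∃ W : K →L[ℂ] K',
      (∀ (s : S) (h : H), W (adjoint (U (φ s)) (j h)) = adjoint (U' (φ s)) (j' h)) ∧
      ∀ ξ : K, ‖W ξ‖ = ‖ξ‖ := by
  classical
  have hS : Nonempty S := by
    by_contra hSe
    rw [not_nonempty_iff] at hSe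
    rw [Set.iUnion_of_empty] at hmin
    exact absurd hmin.nonempty (by simp)
  obtain ⟨s₀⟩ := hS
  have key_inner : ∀ (s t : S) (h k : H),
      ⟪adjoint (U' (φ s)) (j' h), adjoint (U' (φ t)) (j' k)⟫_ℂ
        = ⟪adjoint (U (φ s)) (j h), adjoint (U (φ t)) (j k)⟫_ℂ := by
    intro s t h k
    obtain ⟨u, v, huv⟩ := hOre s t
    rw [aux_inner φ μ V j' U' hU' hU1' hrep' hdil' huv,
        aux_inner φ μ V j U hU hU1 hrep hdil huv]
  have norm_eq : ∀ (s : S) (h : H),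
      ‖adjoint (U' (φ s)) (j' h)‖ = ‖adjoint (U (φ s)) (j h)‖ := by
    intro s h
    have h2 := key_inner s s h h
    rw [inner_self_eq_norm_sq_to_K, inner_self_eq_norm_sq_to_K] at h2
    have h3 : ‖adjoint (U' (φ s)) (j' h)‖ ^ 2 = ‖adjoint (U (φ s)) (j h)‖ ^ 2 := by
      exact_mod_cast h2
    rw [sq_eq_sq_iff_abs_eq_abs, abs_of_nonneg (norm_nonneg _),
      abs_of_nonneg (norm_nonneg _)] at h3
    exact h3
  have wd : ∀ (s t : S) (h k : H),
      adjoint (U (φ s)) (j h) = adjoint (U (φ t)) (j k) →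
      adjoint (U' (φ s)) (j' h) = adjoint (U' (φ t)) (j' k) := by
    intro s t h k he
    have h0 : ⟪adjoint (U' (φ s)) (j' h) - adjoint (U' (φ t)) (j' k),
            adjoint (U' (φ s)) (j' h) - adjoint (U' (φ t)) (j' k)⟫_ℂ = 0 := by
      rw [inner_sub_sub_self, key_inner, key_inner, key_inner, key_inner, he]
      ring
    rwa [inner_self_eq_zero, sub_eq_zero] at h0
  let D : Submodule ℂ K :=
    { carrier := {ξ | ∃ s h, adjoint (U (φ s)) (j h) = ξ}
      zero_mem' := ⟨s₀, 0, by simp⟩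
      add_mem' := by
        rintro ξ η ⟨s, h, rfl⟩ ⟨t, k, rfl⟩
        obtain ⟨u, v, huv⟩ := hOre s t
        refine ⟨u * s, (starRingEnd ℂ) (μ (φ u) (φ s)) • V u h
          + (starRingEnd ℂ) (μ (φ v) (φ t)) • V v k, ?_⟩
        rw [aux_shift φ μ V j U hU1 hrep hdil u s h,
          aux_shift φ μ V j U hU1 hrep hdil v t k, ← huv]
        simp [map_add, map_smul]
      smul_mem' := by
        rintro c ξ ⟨s, h, rfl⟩
        exact ⟨s, c • h, by simp [map_smul]⟩ }
  have hDset : (⋃ s : S, adjoint (U (φ s)) '' Set.range j) = (D : Set K) := by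
    ext ξ
    simp only [Set.mem_iUnion, Set.mem_image, Set.mem_range, SetLike.mem_coe]
    constructor
    · rintro ⟨s, x, ⟨h, rfl⟩, hx⟩; exact ⟨s, h, hx⟩
    · rintro ⟨s, h, hx⟩; exact ⟨s, j h, ⟨h, rfl⟩, hx⟩
  have hD : Dense (D : Set K) := hDset ▸ hmin
  have hmem : ∀ ξ : D, ∃ s h, adjoint (U (φ s)) (j h) = (ξ : K) := fun ξ => ξ.2
  choose σ η hrm using hmem
  set f₀ : D → K' := fun ξ => adjoint (U' (φ (σ ξ))) (j' (η ξ)) with hf₀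
  have f_spec : ∀ (ξ : D) (s : S) (h : H), adjoint (U (φ s)) (j h) = (ξ : K) →
      f₀ ξ = adjoint (U' (φ s)) (j' h) := by
    intro ξ s h he
    exact (wd _ _ _ _ ((hrm ξ).trans he.symm))
  have f_add : ∀ ξ ζ : D, f₀ (ξ + ζ) = f₀ ξ + f₀ ζ := by
    intro ξ ζ
    obtain ⟨u, v, huv⟩ := hOre (σ ξ) (σ ζ)
    have hsum : adjoint (U (φ (u * σ ξ)))
        (j ((starRingEnd ℂ) (μ (φ u) (φ (σ ξ))) • V u (η ξ)
          + (starRingEnd ℂ) (μ (φ v) (φ (σ ζ))) • V v (η ζ))) = ((ξ + ζ : D) : K) := by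
      rw [Submodule.coe_add, ← hrm ξ, ← hrm ζ,
        aux_shift φ μ V j U hU1 hrep hdil u (σ ξ) (η ξ),
        aux_shift φ μ V j U hU1 hrep hdil v (σ ζ) (η ζ), ← huv]
      simp [map_add, map_smul]
    rw [f_spec (ξ + ζ) _ _ hsum]
    have e1 : (starRingEnd ℂ) (μ (φ u) (φ (σ ξ)))
        • adjoint (U' (φ (u * σ ξ))) (j' (V u (η ξ))) = f₀ ξ :=
      (aux_shift φ μ V j' U' hU1' hrep' hdil' u (σ ξ) (η ξ)).symm
    have e2 : (starRingEnd ℂ) (μ (φ v) (φ (σ ζ)))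
        • adjoint (U' (φ (u * σ ξ))) (j' (V v (η ζ))) = f₀ ζ := by
      rw [huv]
      exact (aux_shift φ μ V j' U' hU1' hrep' hdil' v (σ ζ) (η ζ)).symm
    rw [map_add, map_add, map_smul, map_smul, map_smul, map_smul, e1, e2]
  have f_smul : ∀ (c : ℂ) (ξ : D), f₀ (c • ξ) = c • f₀ ξ := by
    intro c ξ
    have h1 : adjoint (U (φ (σ ξ))) (j (c • η ξ)) = ((c • ξ : D) : K) := by
      rw [Submodule.coe_smul, ← hrm ξ]
      simp [map_smul]
    rw [f_spec _ _ _ h1, map_smul, map_smul]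
  have f_norm : ∀ ξ : D, ‖f₀ ξ‖ = ‖(ξ : K)‖ := by
    intro ξ
    rw [hf₀]
    exact (norm_eq (σ ξ) (η ξ)).trans (by rw [hrm ξ])
  let f : D →ₗᵢ[ℂ] K' :=
    ⟨{ toFun := f₀, map_add' := f_add, map_smul' := f_smul }, f_norm⟩
  have hdr : DenseRange (D.subtypeL : D →L[ℂ] K) := by
    have h1 : Set.range (D.subtypeL : D →L[ℂ] K) = (D : Set K) := Subtype.range_coe
    rw [DenseRange, h1]
    exact hD
  have hui : IsUniformInducing (D.subtypeL : D →L[ℂ] K) :=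
    isometry_subtype_coe.isUniformInducing
  let W : K →L[ℂ] K' := f.toContinuousLinearMap.extend D.subtypeL
  have hW1 : ∀ (s : S) (h : H),
      W (adjoint (U (φ s)) (j h)) = adjoint (U' (φ s)) (j' h) := by
    intro s h
    have hx : adjoint (U (φ s)) (j h) ∈ D := ⟨s, h, rfl⟩
    have h1 : W (D.subtypeL ⟨_, hx⟩) = f.toContinuousLinearMap ⟨_, hx⟩ :=
      ContinuousLinearMap.extend_eq _ hdr hui _
    have h2 : f.toContinuousLinearMap ⟨_, hx⟩ = f₀ ⟨_, hx⟩ := rfl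
    rw [h2, f_spec ⟨_, hx⟩ s h rfl] at h1
    exact h1
  refine ⟨W, hW1, ?_⟩
  have hc1 : Continuous fun ξ : K => ‖W ξ‖ := W.continuous.norm
  have hc2 : Continuous fun ξ : K => ‖ξ‖ := continuous_norm
  have heq : Set.EqOn (fun ξ : K => ‖W ξ‖) (fun ξ : K => ‖ξ‖) (D : Set K) := by
    rintro ξ ⟨s, h, rfl⟩
    show ‖W (adjoint (U (φ s)) (j h))‖ = ‖adjoint (U (φ s)) (j h)‖
    rw [hW1]
    exact norm_eq s h
  have := Continuous.ext_on hD hc1 hc2 heq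
  exact fun ξ => congrFun this ξ

end Aux

set_option maxHeartbeats 1600000 in
/-- **Uniqueness of the minimal unitary dilation.**
Let `S` be an Ore semigroup with enveloping group `(G, φ)`, `lam` a multiplier
on `S` with extension `μ` to `G`, and `V` an isometric `lam`-representation of
`S` on `H`.  If `(𝓗, j, U)` and `(𝓗', j', U')` are two minimal unitary
dilations of `V` with multiplier `μ`, then there is a unitary `W : 𝓗 → 𝓗'`
with `W ∘ j = j'` and `W U_g = U'_g W` for all `g ∈ G`. -/
theorem ore_minimal_unitary_dilation_unique {S : Type u} [Semigroup S]
    (hcancel_left : ∀ a b c : S, a * b = a * c → b = c)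
    (hcancel_right : ∀ a b c : S, b * a = c * a → b = c)
    (hOre : ∀ s t : S, ∃ u v : S, u * s = v * t)
    {G : Type v} [Group G] (φ : S →ₙ* G)
    (hinj : Function.Injective φ)
    (hgen : ∀ g : G, ∃ s t : S, g = (φ s)⁻¹ * φ t)
    (lam : S → S → ℂ)
    (hlam_norm : ∀ s t : S, ‖lam s t‖ = 1)
    (hlam_mult : ∀ r s t : S, lam r s * lam (r * s) t = lam r (s * t) * lam s t)
    (μ : G → G → ℂ)
    (hμ_norm : ∀ g h : G, ‖μ g h‖ = 1)
    (hμ_mult : ∀ g h k : G, μ g h * μ (g * h) k = μ g (h * k) * μ h k)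
    (hμ_ext : ∀ s t : S, μ (φ s) (φ t) = lam s t)
    {H : Type} [NormedAddCommGroup H] [InnerProductSpace ℂ H] [CompleteSpace H]
    (V : S → H →L[ℂ] H)
    (hV_isom : ∀ (s : S) (h : H), ‖V s h‖ = ‖h‖)
    (hV_mult : ∀ s t : S, V s ∘L V t = lam s t • V (s * t))
    -- first minimal unitary dilation
    {𝓗 : Type w} [NormedAddCommGroup 𝓗] [InnerProductSpace ℂ 𝓗] [CompleteSpace 𝓗]
    (j : H →ₗᵢ[ℂ] 𝓗) (U : G → 𝓗 →L[ℂ] 𝓗)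
    (hU_unitary : ∀ g : G, U g ∘L adjoint (U g) = 1 ∧ adjoint (U g) ∘L U g = 1)
    (hU_rep : ∀ g h : G, U g ∘L U h = μ g h • U (g * h))
    (hU_dil : ∀ (s : S) (h : H), U (φ s) (j h) = j (V s h))
    (hU_min : Dense (⋃ s : S, adjoint (U (φ s)) '' Set.range j))
    -- second minimal unitary dilation
    {𝓗' : Type x} [NormedAddCommGroup 𝓗'] [InnerProductSpace ℂ 𝓗'] [CompleteSpace 𝓗']
    (j' : H →ₗᵢ[ℂ] 𝓗') (U' : G → 𝓗' →L[ℂ] 𝓗')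
    (hU'_unitary : ∀ g : G, U' g ∘L adjoint (U' g) = 1 ∧ adjoint (U' g) ∘L U' g = 1)
    (hU'_rep : ∀ g h : G, U' g ∘L U' h = μ g h • U' (g * h))
    (hU'_dil : ∀ (s : S) (h : H), U' (φ s) (j' h) = j' (V s h))
    (hU'_min : Dense (⋃ s : S, adjoint (U' (φ s)) '' Set.range j')) :
    ∃ W : 𝓗 ≃ₗᵢ[ℂ] 𝓗',
      (∀ h : H, W (j h) = j' h) ∧
      (∀ (g : G) (ξ : 𝓗), W (U g ξ) = U' g (W ξ)) := by
  classical
  have hS : Nonempty S := by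
    by_contra hSe
    rw [not_nonempty_iff] at hSe
    rw [Set.iUnion_of_empty] at hU_min
    exact absurd hU_min.nonempty (by simp)
  obtain ⟨s₀⟩ := hS
  obtain ⟨W₀, hW₀, hW₀n⟩ := exists_W φ μ V j U hOre j' U'
    (fun g => (hU_unitary g).1) (fun g => (hU_unitary g).2) hU_rep hU_dil hU_min
    (fun g => (hU'_unitary g).1) (fun g => (hU'_unitary g).2) hU'_rep hU'_dil
  obtain ⟨W₁, hW₁, hW₁n⟩ := exists_W φ μ V j' U' hOre j U
    (fun g => (hU'_unitary g).1) (fun g => (hU'_unitary g).2) hU'_rep hU'_dil hU'_min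
    (fun g => (hU_unitary g).1) (fun g => (hU_unitary g).2) hU_rep hU_dil
  have hleft : ∀ ξ : 𝓗, W₁ (W₀ ξ) = ξ := by
    have hc1 : Continuous fun ξ : 𝓗 => W₁ (W₀ ξ) := W₁.continuous.comp W₀.continuous
    have heq : Set.EqOn (fun ξ : 𝓗 => W₁ (W₀ ξ)) id
        (⋃ s : S, adjoint (U (φ s)) '' Set.range j) := by
      rintro ξ hξ
      simp only [Set.mem_iUnion, Set.mem_image, Set.mem_range] at hξ
      obtain ⟨s, x, ⟨h, rfl⟩, rfl⟩ := hξ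
      show W₁ (W₀ (adjoint (U (φ s)) (j h))) = adjoint (U (φ s)) (j h)
      rw [hW₀, hW₁]
    have := Continuous.ext_on hU_min hc1 continuous_id heq
    exact fun ξ => congrFun this ξ
  have hright : ∀ ζ : 𝓗', W₀ (W₁ ζ) = ζ := by
    have hc1 : Continuous fun ζ : 𝓗' => W₀ (W₁ ζ) := W₀.continuous.comp W₁.continuous
    have heq : Set.EqOn (fun ζ : 𝓗' => W₀ (W₁ ζ)) id
        (⋃ s : S, adjoint (U' (φ s)) '' Set.range j') := by
      rintro ζ hζ
      simp only [Set.mem_iUnion, Set.mem_image, Set.mem_range] at hζ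
      obtain ⟨s, x, ⟨h, rfl⟩, rfl⟩ := hζ
      show W₀ (W₁ (adjoint (U' (φ s)) (j' h))) = adjoint (U' (φ s)) (j' h)
      rw [hW₁, hW₀]
    have := Continuous.ext_on hU'_min hc1 continuous_id heq
    exact fun ζ => congrFun this ζ
  let E : 𝓗 ≃ₗ[ℂ] 𝓗' := LinearEquiv.ofLinear (W₀ : 𝓗 →ₗ[ℂ] 𝓗') (W₁ : 𝓗' →ₗ[ℂ] 𝓗)
    (LinearMap.ext fun ζ => hright ζ) (LinearMap.ext fun ξ => hleft ξ)
  let W : 𝓗 ≃ₗᵢ[ℂ] 𝓗' := ⟨E, fun ξ => hW₀n ξ⟩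
  have hWc : ∀ ξ : 𝓗, W ξ = W₀ ξ := fun _ => rfl
  refine ⟨W, ?_, ?_⟩
  · intro h
    have h1 : j h = adjoint (U (φ s₀)) (j (V s₀ h)) := by
      rw [← hU_dil s₀ h, ← comp_apply, (hU_unitary (φ s₀)).2, one_apply_eq_self]
    have h2 : adjoint (U' (φ s₀)) (j' (V s₀ h)) = j' h := by
      rw [← hU'_dil s₀ h, ← comp_apply, (hU'_unitary (φ s₀)).2, one_apply_eq_self]
    rw [hWc, h1, hW₀ s₀ (V s₀ h), h2]
  · have stepA : ∀ (t : S) (ξ : 𝓗),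
        W₀ (adjoint (U (φ t)) ξ) = adjoint (U' (φ t)) (W₀ ξ) := by
      intro t
      have hc1 : Continuous fun ξ : 𝓗 => W₀ (adjoint (U (φ t)) ξ) :=
        W₀.continuous.comp (adjoint (U (φ t))).continuous
      have hc2 : Continuous fun ξ : 𝓗 => adjoint (U' (φ t)) (W₀ ξ) :=
        (adjoint (U' (φ t))).continuous.comp W₀.continuous
      have heq : Set.EqOn (fun ξ : 𝓗 => W₀ (adjoint (U (φ t)) ξ))
          (fun ξ : 𝓗 => adjoint (U' (φ t)) (W₀ ξ))
          (⋃ s : S, adjoint (U (φ s)) '' Set.range j) := by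
        rintro ξ hξ
        simp only [Set.mem_iUnion, Set.mem_image, Set.mem_range] at hξ
        obtain ⟨s, x, ⟨h, rfl⟩, rfl⟩ := hξ
        show W₀ (adjoint (U (φ t)) (adjoint (U (φ s)) (j h)))
          = adjoint (U' (φ t)) (W₀ (adjoint (U (φ s)) (j h)))
        rw [hW₀ s h, ← comp_apply (adjoint (U (φ t))), ← comp_apply (adjoint (U' (φ t))),
          aux_adj_comp φ μ U hU_rep s t, aux_adj_comp φ μ U' hU'_rep s t,
          smul_apply, smul_apply, map_smul, hW₀ (s * t) h]
      have := Continuous.ext_on hU_min hc1 hc2 heq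
      exact fun ξ => congrFun this ξ
    have stepB : ∀ (t : S) (ξ : 𝓗),
        W₀ (U (φ t) ξ) = U' (φ t) (W₀ ξ) := by
      intro t
      have hc1 : Continuous fun ξ : 𝓗 => W₀ (U (φ t) ξ) :=
        W₀.continuous.comp (U (φ t)).continuous
      have hc2 : Continuous fun ξ : 𝓗 => U' (φ t) (W₀ ξ) :=
        (U' (φ t)).continuous.comp W₀.continuous
      have heq : Set.EqOn (fun ξ : 𝓗 => W₀ (U (φ t) ξ))
          (fun ξ : 𝓗 => U' (φ t) (W₀ ξ))
          (⋃ s : S, adjoint (U (φ s)) '' Set.range j) := by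
        rintro ξ hξ
        simp only [Set.mem_iUnion, Set.mem_image, Set.mem_range] at hξ
        obtain ⟨s, x, ⟨h, rfl⟩, rfl⟩ := hξ
        obtain ⟨u, v, huv⟩ := hOre s t
        show W₀ (U (φ t) (adjoint (U (φ s)) (j h)))
          = U' (φ t) (W₀ (adjoint (U (φ s)) (j h)))
        rw [aux_U_on_gen φ μ V j U hμ_norm (fun g => (hU_unitary g).1)
            (fun g => (hU_unitary g).2) hU_rep hU_dil huv h,
          map_smul, hW₀ v (V u h),
          ← aux_U_on_gen φ μ V j' U' hμ_norm (fun g => (hU'_unitary g).1)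
            (fun g => (hU'_unitary g).2) hU'_rep hU'_dil huv h,
          hW₀ s h]
      have := Continuous.ext_on hU_min hc1 hc2 heq
      exact fun ξ => congrFun this ξ
    intro g ξ
    obtain ⟨p, q, hg⟩ := hgen g
    have hq : φ p * g = φ q := by rw [hg]; group
    have hUg : U g = μ (φ p) g • (adjoint (U (φ p)) ∘L U (φ q)) := by
      have h1 : U (φ p) ∘L U g = μ (φ p) g • U (φ q) := by
        rw [hU_rep, hq]
      calc U g = (adjoint (U (φ p)) ∘L U (φ p)) ∘L U g := by
            rw [(hU_unitary (φ p)).2, one_def, id_comp]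
        _ = adjoint (U (φ p)) ∘L (U (φ p) ∘L U g) := by rw [comp_assoc]
        _ = μ (φ p) g • (adjoint (U (φ p)) ∘L U (φ q)) := by rw [h1, comp_smul]
    have hU'g : U' g = μ (φ p) g • (adjoint (U' (φ p)) ∘L U' (φ q)) := by
      have h1 : U' (φ p) ∘L U' g = μ (φ p) g • U' (φ q) := by
        rw [hU'_rep, hq]
      calc U' g = (adjoint (U' (φ p)) ∘L U' (φ p)) ∘L U' g := by
            rw [(hU'_unitary (φ p)).2, one_def, id_comp]
        _ = adjoint (U' (φ p)) ∘L (U' (φ p) ∘L U' g) := by rw [comp_assoc]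
        _ = μ (φ p) g • (adjoint (U' (φ p)) ∘L U' (φ q)) := by rw [h1, comp_smul]
    rw [hWc, hWc, hUg, hU'g, smul_apply, smul_apply, comp_apply, comp_apply,
      map_smul, stepA p, stepB q]
end

section
/- Let S be an Ore semigroup with enveloping group (G, φ), let A be a unital C*-algebra, and let α be an action of S by injective endomorphisms of A. Suppose (B, β, i) and (B', β', i') are both minimal automorphic dilations of (A, S, α), i.e. for each of them: B (resp. B') is a C*-algebra, β (resp. β') is an action of G by *-automorphisms, i (resp. i') is an injective *-homomorphism of A into it, β_{φ(s)} ∘ i = i ∘ α_s for all s ∈ S, and ⋃_{s ∈ S} β_{φ(s)}⁻¹(i(A)) is dense. Then there exists a *-isomorphism θ : B → B' such that θ ∘ i = i' and θ ∘ β_g = β'_g ∘ θ for every g ∈ G. -/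
/-- Auxiliary construction: a continuous linear "intertwiner" from one minimal automorphic
dilation to another, which matches the canonical dense subalgebras, is multiplicative,
star-preserving, and equivariant. -/
theorem ore_dilation_aux_map {S : Type u} [Semigroup S]
    (hOre : ∀ s t : S, ∃ u v : S, u * s = v * t)
    {G : Type v} [Group G] (φ : S →ₙ* G)
    (hgen : ∀ g : G, ∃ s t : S, g = (φ s)⁻¹ * φ t)
    {A : Type} [NormedRing A] [StarRing A] [CStarRing A] [NormedAlgebra ℂ A]
    [StarModule ℂ A] [CompleteSpace A]
    (α : S → A →⋆ₙₐ[ℂ] A)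
    {B : Type w} [NonUnitalNormedRing B] [StarRing B] [CStarRing B]
    [NormedSpace ℂ B] [IsScalarTower ℂ B B] [SMulCommClass ℂ B B]
    [StarModule ℂ B] [CompleteSpace B]
    (β : G → B ≃⋆ₐ[ℂ] B) (i : A →⋆ₙₐ[ℂ] B)
    (hβ_mul : ∀ (g h : G) (b : B), β g (β h b) = β (g * h) b)
    (hi_inj : Function.Injective i)
    (hdil : ∀ (s : S) (a : A), β (φ s) (i a) = i (α s a))
    (hmin : Dense (⋃ s : S, (β (φ s)).symm '' Set.range i))
    {B' : Type x} [NonUnitalNormedRing B'] [StarRing B'] [CStarRing B']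
    [NormedSpace ℂ B'] [IsScalarTower ℂ B' B'] [SMulCommClass ℂ B' B']
    [StarModule ℂ B'] [CompleteSpace B']
    (β' : G → B' ≃⋆ₐ[ℂ] B') (i' : A →⋆ₙₐ[ℂ] B')
    (hβ'_mul : ∀ (g h : G) (b : B'), β' g (β' h b) = β' (g * h) b)
    (hi'_inj : Function.Injective i')
    (hdil' : ∀ (s : S) (a : A), β' (φ s) (i' a) = i' (α s a)) :
    ∃ θ : B →L[ℂ] B',
      (∀ (s : S) (a : A), θ ((β (φ s)).symm (i a)) = (β' (φ s)).symm (i' a)) ∧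
      (∀ x y : B, θ (x * y) = θ x * θ y) ∧
      (∀ x : B, θ (star x) = star (θ x)) ∧
      (∀ (g : G) (b : B), θ (β g b) = β' g (θ b)) := by
  classical
  letI : CStarAlgebra A := {}
  letI : NonUnitalCStarAlgebra B := {}
  letI : NonUnitalCStarAlgebra B' := {}
  -- absorption lemmas
  have habs : ∀ (u s : S) (a : A),
      (β (φ (u * s))).symm (i (α u a)) = (β (φ s)).symm (i a) := by
    intro u s a
    have h1 : β (φ (u * s)) ((β (φ s)).symm (i a)) = i (α u a) := by
      rw [map_mul φ, ← hβ_mul, StarAlgEquiv.apply_symm_apply]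
      exact hdil u a
    rw [← h1, StarAlgEquiv.symm_apply_apply]
  have habs' : ∀ (u s : S) (a : A),
      (β' (φ (u * s))).symm (i' (α u a)) = (β' (φ s)).symm (i' a) := by
    intro u s a
    have h1 : β' (φ (u * s)) ((β' (φ s)).symm (i' a)) = i' (α u a) := by
      rw [map_mul φ, ← hβ'_mul, StarAlgEquiv.apply_symm_apply]
      exact hdil' u a
    rw [← h1, StarAlgEquiv.symm_apply_apply]
  -- well-definedness of the prospective map
  have hwd : ∀ (s : S) (a : A) (t : S) (b : A),
      (β (φ s)).symm (i a) = (β (φ t)).symm (i b) →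
      (β' (φ s)).symm (i' a) = (β' (φ t)).symm (i' b) := by
    intro s a t b h
    obtain ⟨u, v, huv⟩ := hOre s t
    rw [← habs u s a, ← habs v t b, huv] at h
    have hab : α u a = α v b := hi_inj ((β (φ (v * t))).symm.injective h)
    rw [← habs' u s a, ← habs' v t b, huv, hab]
  set D : Set B := ⋃ s : S, (β (φ s)).symm '' Set.range i with hDdef
  have hmemD : ∀ b : B, b ∈ D ↔ ∃ s a, (β (φ s)).symm (i a) = b := by
    intro b
    constructor
    · intro hb
      simp only [hDdef, Set.mem_iUnion, Set.mem_image, Set.mem_range] at hb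
      obtain ⟨s, x, ⟨a, rfl⟩, hx⟩ := hb
      exact ⟨s, a, hx⟩
    · rintro ⟨s, a, h⟩
      exact Set.mem_iUnion.2 ⟨s, ⟨i a, ⟨a, rfl⟩, h⟩⟩
  obtain ⟨s₀, t₀, -⟩ := hgen 1
  have hcommon : ∀ x y : B, (∃ s a, (β (φ s)).symm (i a) = x) →
      (∃ t b, (β (φ t)).symm (i b) = y) →
      ∃ w a b, (β (φ w)).symm (i a) = x ∧ (β (φ w)).symm (i b) = y := by
    rintro x y ⟨s, a, rfl⟩ ⟨t, b, rfl⟩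
    obtain ⟨u, v, huv⟩ := hOre s t
    exact ⟨u * s, α u a, α v b, habs u s a, by rw [huv]; exact habs v t b⟩
  -- `D` as a submodule
  let M : Submodule ℂ B :=
    { carrier := D
      add_mem' := by
        intro x y hx hy
        obtain ⟨w, a, b, hxa, hyb⟩ := hcommon x y ((hmemD x).1 hx) ((hmemD y).1 hy)
        refine (hmemD (x + y)).2 ⟨w, a + b, ?_⟩
        rw [map_add, map_add, hxa, hyb]
      zero_mem' := (hmemD 0).2 ⟨s₀, 0, by simp⟩
      smul_mem' := by
        intro c x hx
        obtain ⟨s, a, hxa⟩ := (hmemD x).1 hx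
        refine (hmemD (c • x)).2 ⟨s, c • a, ?_⟩
        rw [map_smul, map_smul, hxa] }
  have hrep : ∀ x : M, ∃ s a, (β (φ s)).symm (i a) = (x : B) := fun x => (hmemD x).1 x.2
  choose σ τ hστ using hrep
  have hkey : ∀ (s : S) (a : A) (x : M), (β (φ s)).symm (i a) = (x : B) →
      (β' (φ (σ x))).symm (i' (τ x)) = (β' (φ s)).symm (i' a) := by
    intro s a x hx
    exact hwd _ _ _ _ (by rw [hστ x, ← hx])
  let f : M →ₗ[ℂ] B' :=
    { toFun := fun x => (β' (φ (σ x))).symm (i' (τ x))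
      map_add' := by
        intro x y
        obtain ⟨w, a, b, hxa, hyb⟩ :=
          hcommon (x : B) (y : B) ⟨σ x, τ x, hστ x⟩ ⟨σ y, τ y, hστ y⟩
        have hxy : (β (φ w)).symm (i (a + b)) = ((x + y : M) : B) := by
          rw [map_add, map_add, hxa, hyb]; rfl
        show (β' (φ (σ (x + y)))).symm (i' (τ (x + y))) =
          (β' (φ (σ x))).symm (i' (τ x)) + (β' (φ (σ y))).symm (i' (τ y))
        rw [hkey w (a + b) (x + y) hxy, hkey w a x hxa, hkey w b y hyb,
          map_add, map_add]
      map_smul' := by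
        intro c x
        obtain ⟨s, a, hxa⟩ : ∃ s a, (β (φ s)).symm (i a) = (x : B) := ⟨σ x, τ x, hστ x⟩
        have hxy : (β (φ s)).symm (i (c • a)) = ((c • x : M) : B) := by
          rw [map_smul, map_smul, hxa]; rfl
        show (β' (φ (σ (c • x)))).symm (i' (τ (c • x))) = c • (β' (φ (σ x))).symm (i' (τ x))
        rw [hkey s (c • a) (c • x) hxy, hkey s a x hxa, map_smul, map_smul] }
  have hfnorm : ∀ x : M, ‖f x‖ = ‖x‖ := by
    intro x
    have h1 : ‖(β' (φ (σ x))).symm (i' (τ x))‖ = ‖τ x‖ := by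
      rw [NonUnitalStarAlgHom.norm_map (F := B' ≃⋆ₐ[ℂ] B') ((β' (φ (σ x))).symm)
        (EquivLike.injective _) (i' (τ x)),
        NonUnitalStarAlgHom.norm_map i' hi'_inj (τ x)]
    have h2 : ‖(x : B)‖ = ‖τ x‖ := by
      rw [← hστ x,
        NonUnitalStarAlgHom.norm_map (F := B ≃⋆ₐ[ℂ] B) ((β (φ (σ x))).symm)
        (EquivLike.injective _) (i (τ x)),
        NonUnitalStarAlgHom.norm_map i hi_inj (τ x)]
    show ‖(β' (φ (σ x))).symm (i' (τ x))‖ = ‖x‖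
    rw [h1, ← h2]
    rfl
  let fC : M →L[ℂ] B' := f.mkContinuous 1 (fun x => by rw [hfnorm x, one_mul])
  let e : M →L[ℂ] B := M.subtypeL
  have hdense : DenseRange e := hmin.denseRange_val
  have hui : IsUniformInducing e := isometry_subtype_coe.isUniformInducing
  let θ : B →L[ℂ] B' := fC.extend e
  have hmem : ∀ (s : S) (a : A), (β (φ s)).symm (i a) ∈ M :=
    fun s a => (hmemD _).2 ⟨s, a, rfl⟩
  have hθ : ∀ (s : S) (a : A), θ ((β (φ s)).symm (i a)) = (β' (φ s)).symm (i' a) := by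
    intro s a
    have h1 : θ (e ⟨(β (φ s)).symm (i a), hmem s a⟩) = fC ⟨(β (φ s)).symm (i a), hmem s a⟩ :=
      ContinuousLinearMap.extend_eq fC hdense hui _
    have h2 : fC ⟨(β (φ s)).symm (i a), hmem s a⟩ = (β' (φ s)).symm (i' a) :=
      hkey s a ⟨(β (φ s)).symm (i a), hmem s a⟩ rfl
    exact h1.trans h2
  -- multiplicativity
  have hmulD : ∀ x y : B, x ∈ D → y ∈ D → θ (x * y) = θ x * θ y := by
    intro x y hx hy
    obtain ⟨w, a, b, hxa, hyb⟩ := hcommon x y ((hmemD x).1 hx) ((hmemD y).1 hy)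
    have hxy : x * y = (β (φ w)).symm (i (a * b)) := by
      rw [map_mul, map_mul, hxa, hyb]
    rw [hxy, hθ w (a * b), ← hxa, ← hyb, hθ w a, hθ w b, map_mul, map_mul]
  have hmul1 : ∀ y : B, y ∈ D → ∀ x : B, θ (x * y) = θ x * θ y := by
    intro y hy x
    have hext := Continuous.ext_on hmin
      (θ.continuous.comp (continuous_mul_right y))
      (θ.continuous.mul continuous_const)
      (fun x hx => hmulD x y hx hy)
    exact congrFun hext x
  have hmul : ∀ x y : B, θ (x * y) = θ x * θ y := by
    intro x y
    have hext := Continuous.ext_on hmin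
      (θ.continuous.comp (continuous_mul_left x))
      (continuous_const.mul θ.continuous)
      (fun y hy => hmul1 y hy x)
    exact congrFun hext y
  -- star
  have hstarD : ∀ x : B, x ∈ D → θ (star x) = star (θ x) := by
    intro x hx
    obtain ⟨s, a, rfl⟩ := (hmemD x).1 hx
    have h1 : star ((β (φ s)).symm (i a)) = (β (φ s)).symm (i (star a)) := by
      rw [map_star, map_star]
    rw [h1, hθ s (star a), hθ s a, map_star, map_star]
  have hstar : ∀ x : B, θ (star x) = star (θ x) := by
    intro x
    have hext := Continuous.ext_on hmin
      (θ.continuous.comp continuous_star)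
      (continuous_star.comp θ.continuous)
      hstarD
    exact congrFun hext x
  -- equivariance
  have hβcont : ∀ g : G, Continuous (β g) := fun g =>
    (NonUnitalStarAlgHom.isometry (F := B ≃⋆ₐ[ℂ] B) (β g) (EquivLike.injective (β g))).continuous
  have hβ'cont : ∀ g : G, Continuous (β' g) := fun g =>
    (NonUnitalStarAlgHom.isometry (F := B' ≃⋆ₐ[ℂ] B') (β' g)
      (EquivLike.injective (β' g))).continuous
  have heqsD : ∀ (t : S) (x : B), x ∈ D → θ (β (φ t) x) = β' (φ t) (θ x) := by
    intro t x hx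
    obtain ⟨s, a, rfl⟩ := (hmemD x).1 hx
    obtain ⟨u, v, huv⟩ := hOre t s
    have h1 : β (φ u) (β (φ t) ((β (φ s)).symm (i a))) = i (α v a) := by
      rw [hβ_mul, ← map_mul φ, huv, map_mul φ, ← hβ_mul, StarAlgEquiv.apply_symm_apply]
      exact hdil v a
    have h2 : β (φ t) ((β (φ s)).symm (i a)) = (β (φ u)).symm (i (α v a)) := by
      rw [← h1, StarAlgEquiv.symm_apply_apply]
    have h1' : β' (φ u) (β' (φ t) ((β' (φ s)).symm (i' a))) = i' (α v a) := by
      rw [hβ'_mul, ← map_mul φ, huv, map_mul φ, ← hβ'_mul, StarAlgEquiv.apply_symm_apply]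
      exact hdil' v a
    have h2' : β' (φ t) ((β' (φ s)).symm (i' a)) = (β' (φ u)).symm (i' (α v a)) := by
      rw [← h1', StarAlgEquiv.symm_apply_apply]
    rw [h2, hθ u (α v a), hθ s a, h2']
  have heqs : ∀ (t : S) (x : B), θ (β (φ t) x) = β' (φ t) (θ x) := by
    intro t x
    have hext := Continuous.ext_on hmin
      (θ.continuous.comp (hβcont (φ t)))
      ((hβ'cont (φ t)).comp θ.continuous)
      (fun x hx => heqsD t x hx)
    exact congrFun hext x
  have heq : ∀ (g : G) (b : B), θ (β g b) = β' g (θ b) := by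
    intro g b
    obtain ⟨p, q, hg⟩ := hgen g
    have h3 : β (φ p) (β g b) = β (φ q) b := by
      rw [hβ_mul, hg, mul_inv_cancel_left]
    have h3' : β' (φ p) (β' g (θ b)) = β' (φ q) (θ b) := by
      rw [hβ'_mul, hg, mul_inv_cancel_left]
    have h4 : β' (φ p) (θ (β g b)) = β' (φ p) (β' g (θ b)) := by
      rw [← heqs p (β g b), h3, heqs q b, h3']
    exact (EquivLike.injective (β' (φ p))) h4
  exact ⟨θ, hθ, hmul, hstar, heq⟩



/-- **Uniqueness of the minimal automorphic dilation.**
Let `S` be an Ore semigroup with enveloping group `(G, φ)` and let `α` be an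
action of `S` by injective *-endomorphisms of a unital C*-algebra `A`.  If
`(B, β, i)` and `(B', β', i')` are two minimal automorphic dilations of
`(A, S, α)`, then there exists a *-isomorphism `θ : B → B'` with `θ ∘ i = i'`
and `θ ∘ β g = β' g ∘ θ` for all `g ∈ G`. -/
theorem ore_minimal_automorphic_dilation_unique {S : Type u} [Semigroup S]
    (hcancel_left : ∀ a b c : S, a * b = a * c → b = c)
    (hcancel_right : ∀ a b c : S, b * a = c * a → b = c)
    (hOre : ∀ s t : S, ∃ u v : S, u * s = v * t)
    {G : Type v} [Group G] (φ : S →ₙ* G)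
    (hinj : Function.Injective φ)
    (hgen : ∀ g : G, ∃ s t : S, g = (φ s)⁻¹ * φ t)
    {A : Type} [NormedRing A] [StarRing A] [CStarRing A] [NormedAlgebra ℂ A]
    [StarModule ℂ A] [CompleteSpace A]
    (α : S → A →⋆ₙₐ[ℂ] A)
    (hα_inj : ∀ s : S, Function.Injective (α s))
    (hα_mul : ∀ (s t : S) (a : A), α s (α t a) = α (s * t) a)
    -- first minimal automorphic dilation
    {B : Type w} [NonUnitalNormedRing B] [StarRing B] [CStarRing B]
    [NormedSpace ℂ B] [IsScalarTower ℂ B B] [SMulCommClass ℂ B B]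
    [StarModule ℂ B] [CompleteSpace B]
    (β : G → B ≃⋆ₐ[ℂ] B) (i : A →⋆ₙₐ[ℂ] B)
    (hβ_mul : ∀ (g h : G) (b : B), β g (β h b) = β (g * h) b)
    (hi_inj : Function.Injective i)
    (hdil : ∀ (s : S) (a : A), β (φ s) (i a) = i (α s a))
    (hmin : Dense (⋃ s : S, (β (φ s)).symm '' Set.range i))
    -- second minimal automorphic dilation
    {B' : Type x} [NonUnitalNormedRing B'] [StarRing B'] [CStarRing B']
    [NormedSpace ℂ B'] [IsScalarTower ℂ B' B'] [SMulCommClass ℂ B' B']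
    [StarModule ℂ B'] [CompleteSpace B']
    (β' : G → B' ≃⋆ₐ[ℂ] B') (i' : A →⋆ₙₐ[ℂ] B')
    (hβ'_mul : ∀ (g h : G) (b : B'), β' g (β' h b) = β' (g * h) b)
    (hi'_inj : Function.Injective i')
    (hdil' : ∀ (s : S) (a : A), β' (φ s) (i' a) = i' (α s a))
    (hmin' : Dense (⋃ s : S, (β' (φ s)).symm '' Set.range i')) :
    ∃ θ : B ≃⋆ₐ[ℂ] B',
      (∀ a : A, θ (i a) = i' a) ∧
      (∀ (g : G) (b : B), θ (β g b) = β' g (θ b)) := by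
  classical
  obtain ⟨θ₁, hθ₁, hθ₁mul, hθ₁star, hθ₁eq⟩ :=
    ore_dilation_aux_map hOre φ hgen α β i hβ_mul hi_inj hdil hmin β' i' hβ'_mul hi'_inj hdil'
  obtain ⟨θ₂, hθ₂, -, -, -⟩ :=
    ore_dilation_aux_map hOre φ hgen α β' i' hβ'_mul hi'_inj hdil' hmin' β i hβ_mul hi_inj hdil
  have hleft : ∀ b : B, θ₂ (θ₁ b) = b := by
    intro b
    have hext := Continuous.ext_on hmin (θ₂.continuous.comp θ₁.continuous) continuous_id
      (fun x hx => by
        simp only [Set.mem_iUnion, Set.mem_image, Set.mem_range] at hx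
        obtain ⟨s, y, ⟨a, rfl⟩, rfl⟩ := hx
        show θ₂ (θ₁ ((β (φ s)).symm (i a))) = (β (φ s)).symm (i a)
        rw [hθ₁ s a, hθ₂ s a])
    exact congrFun hext b
  have hright : ∀ b : B', θ₁ (θ₂ b) = b := by
    intro b
    have hext := Continuous.ext_on hmin' (θ₁.continuous.comp θ₂.continuous) continuous_id
      (fun x hx => by
        simp only [Set.mem_iUnion, Set.mem_image, Set.mem_range] at hx
        obtain ⟨s, y, ⟨a, rfl⟩, rfl⟩ := hx
        show θ₁ (θ₂ ((β' (φ s)).symm (i' a))) = (β' (φ s)).symm (i' a)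
        rw [hθ₂ s a, hθ₁ s a])
    exact congrFun hext b
  refine ⟨{ toFun := θ₁, invFun := θ₂, left_inv := hleft, right_inv := hright,
            map_mul' := hθ₁mul, map_add' := fun x y => θ₁.map_add x y,
            map_star' := hθ₁star, map_smul' := fun c x => θ₁.map_smul c x }, ?_, ?_⟩
  · intro a
    obtain ⟨s₀, t₀, -⟩ := hgen 1
    show θ₁ (i a) = i' a
    have h1 : (β (φ s₀)).symm (i (α s₀ a)) = i a := by
      rw [← hdil s₀ a, StarAlgEquiv.symm_apply_apply]
    have h2 : (β' (φ s₀)).symm (i' (α s₀ a)) = i' a := by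
      rw [← hdil' s₀ a, StarAlgEquiv.symm_apply_apply]
    rw [← h1, hθ₁ s₀ (α s₀ a), h2]
  · intro g b
    exact hθ₁eq g b
end

section
/- Let S be an Ore semigroup with enveloping group (G, φ), let A be a unital C*-algebra, let α be an action of S by injective endomorphisms of A, let λ be a multiplier on S, and let μ be a multiplier on G with μ(φ(s), φ(t)) = λ(s,t) for all s, t ∈ S. Let (π, V) be a covariant representation of (A, S, α, λ) on a complex Hilbert space H, let (B, β, i) be a minimal automorphic dilation of (A, S, α), and let (𝓗, j, Ũ) be a minimal unitary dilation of V with multiplier μ. Then there exists a *-homomorphism π̃ from B into the bounded operators on 𝓗 such that π̃ is nondegenerate, π̃(β_g(b)) = Ũ_g π̃(b) Ũ_g* for every g ∈ G and b ∈ B, and π̃(i(a)) (j h) = j (π(a) h) for every a ∈ A and h ∈ H. -/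
open ContinuousLinearMap

set_option maxHeartbeats 2000000 in
/-- **Dilation of covariant representations.**
Let `S` be an Ore semigroup with enveloping group `(G, φ)`, `α` an action of
`S` by injective *-endomorphisms of a unital C*-algebra `A`, `lam` a multiplier
on `S` with extension `μ` to `G`.  Let `(π, V)` be a covariant representation
of `(A, S, α, lam)` on a Hilbert space `H`, let `(B, β, i)` be a minimal
automorphic dilation of `(A, S, α)` and let `(𝓗, j, Ut)` be a minimal unitary
dilation of `V` with multiplier `μ`.  Then there is a nondegenerate
*-homomorphism `π̃ : B → B(𝓗)` such that `(π̃, Ut)` is covariant for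
`(B, G, β, μ)` and `π̃ ∘ i = π` on `H`. -/
theorem ore_covariant_representation_dilates {S : Type u} [Semigroup S]
    (hcancel_left : ∀ a b c : S, a * b = a * c → b = c)
    (hcancel_right : ∀ a b c : S, b * a = c * a → b = c)
    (hOre : ∀ s t : S, ∃ u v : S, u * s = v * t)
    {G : Type v} [Group G] (φ : S →ₙ* G)
    (hinj : Function.Injective φ)
    (hgen : ∀ g : G, ∃ s t : S, g = (φ s)⁻¹ * φ t)
    (lam : S → S → ℂ)
    (hlam_norm : ∀ s t : S, ‖lam s t‖ = 1)
    (hlam_mult : ∀ r s t : S, lam r s * lam (r * s) t = lam r (s * t) * lam s t)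
    (μ : G → G → ℂ)
    (hμ_norm : ∀ g h : G, ‖μ g h‖ = 1)
    (hμ_mult : ∀ g h k : G, μ g h * μ (g * h) k = μ g (h * k) * μ h k)
    (hμ_ext : ∀ s t : S, μ (φ s) (φ t) = lam s t)
    {A : Type} [NormedRing A] [StarRing A] [CStarRing A] [NormedAlgebra ℂ A]
    [StarModule ℂ A] [CompleteSpace A]
    (α : S → A →⋆ₙₐ[ℂ] A)
    (hα_inj : ∀ s : S, Function.Injective (α s))
    (hα_mul : ∀ (s t : S) (a : A), α s (α t a) = α (s * t) a)
    -- a covariant representation (π, V) of (A, S, α, lam) on H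
    {H : Type} [NormedAddCommGroup H] [InnerProductSpace ℂ H] [CompleteSpace H]
    (π : A →⋆ₐ[ℂ] (H →L[ℂ] H))
    (V : S → H →L[ℂ] H)
    (hV_isom : ∀ (s : S) (h : H), ‖V s h‖ = ‖h‖)
    (hV_mult : ∀ s t : S, V s ∘L V t = lam s t • V (s * t))
    (hcov : ∀ (s : S) (a : A), π (α s a) = V s ∘L π a ∘L adjoint (V s))
    -- a minimal automorphic dilation (B, β, i) of (A, S, α)
    {B : Type w} [NonUnitalNormedRing B] [StarRing B] [CStarRing B]
    [NormedSpace ℂ B] [IsScalarTower ℂ B B] [SMulCommClass ℂ B B]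
    [StarModule ℂ B] [CompleteSpace B]
    (β : G → B ≃⋆ₐ[ℂ] B) (i : A →⋆ₙₐ[ℂ] B)
    (hβ_mul : ∀ (g h : G) (b : B), β g (β h b) = β (g * h) b)
    (hi_inj : Function.Injective i)
    (hdil : ∀ (s : S) (a : A), β (φ s) (i a) = i (α s a))
    (hmin : Dense (⋃ s : S, (β (φ s)).symm '' Set.range i))
    -- a minimal unitary dilation (𝓗, j, Ut) of V with multiplier μ
    {𝓗 : Type x} [NormedAddCommGroup 𝓗] [InnerProductSpace ℂ 𝓗] [CompleteSpace 𝓗]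
    (j : H →ₗᵢ[ℂ] 𝓗) (Ut : G → 𝓗 →L[ℂ] 𝓗)
    (hUt_unitary : ∀ g : G, Ut g ∘L adjoint (Ut g) = 1 ∧ adjoint (Ut g) ∘L Ut g = 1)
    (hUt_rep : ∀ g h : G, Ut g ∘L Ut h = μ g h • Ut (g * h))
    (hUt_dil : ∀ (s : S) (h : H), Ut (φ s) (j h) = j (V s h))
    (hUt_min : Dense (⋃ s : S, adjoint (Ut (φ s)) '' Set.range j)) :
    ∃ πt : B →⋆ₙₐ[ℂ] (𝓗 →L[ℂ] 𝓗),
      -- π̃ is nondegenerate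
      Dense ((Submodule.span ℂ {ξ : 𝓗 | ∃ (b : B) (x : 𝓗), πt b x = ξ} :
        Submodule ℂ 𝓗) : Set 𝓗) ∧
      -- (π̃, Ut) is covariant for (B, G, β, μ)
      (∀ (g : G) (b : B), πt (β g b) = Ut g ∘L πt b ∘L adjoint (Ut g)) ∧
      -- π̃ ∘ i = π on H
      (∀ (a : A) (h : H), πt (i a) (j h) = j (π a h)) := by
  classical
  letI instA : CStarAlgebra A := {}
  letI instB : NonUnitalCStarAlgebra B := {}
  obtain ⟨s₀, t₀, -⟩ := hgen 1
  -- ## contractivity / isometry of the various star homs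
  have hπle : ∀ a : A, ‖π a‖ ≤ ‖a‖ := fun a => NonUnitalStarAlgHom.norm_apply_le π a
  have hαn : ∀ (s : S) (a : A), ‖α s a‖ = ‖a‖ := fun s a =>
    NonUnitalStarAlgHom.norm_map (α s) (hα_inj s) a
  -- ## basic unitary facts
  have hUtUa : ∀ (g : G) (z : 𝓗), Ut g (adjoint (Ut g) z) = z := by
    intro g z
    have := congrArg (fun T : 𝓗 →L[ℂ] 𝓗 => T z) (hUt_unitary g).1
    simpa using this
  have hUaUt : ∀ (g : G) (z : 𝓗), adjoint (Ut g) (Ut g z) = z := by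
    intro g z
    have := congrArg (fun T : 𝓗 →L[ℂ] 𝓗 => T z) (hUt_unitary g).2
    simpa using this
  have hUa_isom : ∀ (g : G) (z : 𝓗), ‖adjoint (Ut g) z‖ = ‖z‖ := by
    intro g z
    refine (ContinuousLinearMap.norm_map_iff_adjoint_comp_self (adjoint (Ut g))).mpr ?_ z
    rw [adjoint_adjoint]; exact (hUt_unitary g).1
  have hUa_inner : ∀ (g : G) (z w : 𝓗),
      inner ℂ (adjoint (Ut g) z) (adjoint (Ut g) w) = inner ℂ z w := by
    intro g z w
    refine (ContinuousLinearMap.inner_map_map_iff_adjoint_comp_self (adjoint (Ut g))).mpr ?_ z w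
    rw [adjoint_adjoint]; exact (hUt_unitary g).1
  have hUa_inj : ∀ g : G, Function.Injective (adjoint (Ut g)) := by
    intro g z w hzw
    have := congrArg (Ut g) hzw
    rwa [hUtUa, hUtUa] at this
  have hconj : ∀ c : ℂ, ‖c‖ = 1 → (starRingEnd ℂ) c * c = 1 := by
    intro c hc
    rw [RCLike.conj_mul, hc]
    norm_num
  have hadj_smul : ∀ (c : ℂ) (T : 𝓗 →L[ℂ] 𝓗),
      adjoint (c • T) = (starRingEnd ℂ) c • adjoint T := by
    intro c T
    rw [← ContinuousLinearMap.star_eq_adjoint, ← ContinuousLinearMap.star_eq_adjoint, star_smul]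
    rfl
  have hUt_rep_adj : ∀ g h : G,
      adjoint (Ut h) ∘L adjoint (Ut g) = (starRingEnd ℂ) (μ g h) • adjoint (Ut (g * h)) := by
    intro g h
    have := congrArg (fun T : 𝓗 →L[ℂ] 𝓗 => adjoint T) (hUt_rep g h)
    simpa [ContinuousLinearMap.adjoint_comp, hadj_smul] using this
  -- ## V facts
  have hVadj : ∀ (s : S) (x : H), adjoint (V s) (V s x) = x := by
    intro s x
    have h1 : adjoint (V s) ∘L V s = 1 :=
      (ContinuousLinearMap.norm_map_iff_adjoint_comp_self (V s)).mp (hV_isom s)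
    have := congrArg (fun T : H →L[ℂ] H => T x) h1
    simpa using this
  have hπα : ∀ (u : S) (b : A) (x : H), π (α u b) (V u x) = V u (π b x) := by
    intro u b x
    rw [hcov u b]
    simp only [ContinuousLinearMap.comp_apply, hVadj]
  have hπα' : ∀ (u t : S) (a : A) (x : H), π (α (u * t) a) (V u x) = V u (π (α t a) x) := by
    intro u t a x
    rw [← hα_mul u t a]
    exact hπα u (α t a) x
  -- ## the fundamental reduction identity
  have hred : ∀ (u t : S) (h : H),
      adjoint (Ut (φ t)) (j h)
        = (starRingEnd ℂ) (μ (φ u) (φ t)) • adjoint (Ut (φ (u * t))) (j (V u h)) := by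
    intro u t h
    have h1 : adjoint (Ut (φ t)) ∘L adjoint (Ut (φ u))
        = (starRingEnd ℂ) (μ (φ u) (φ t)) • adjoint (Ut (φ (u * t))) := by
      rw [map_mul]; exact hUt_rep_adj _ _
    have h2 : adjoint (Ut (φ u)) (j (V u h)) = j h := by
      rw [← hUt_dil u h, hUaUt]
    calc adjoint (Ut (φ t)) (j h)
        = (adjoint (Ut (φ t)) ∘L adjoint (Ut (φ u))) (j (V u h)) := by
          rw [ContinuousLinearMap.comp_apply, h2]
      _ = (starRingEnd ℂ) (μ (φ u) (φ t)) • adjoint (Ut (φ (u * t))) (j (V u h)) := by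
          rw [h1]; rfl
  have hredj : ∀ (u t : S) (h : H),
      adjoint (Ut (φ t)) (j h)
        = adjoint (Ut (φ (u * t))) (j ((starRingEnd ℂ) (μ (φ u) (φ t)) • V u h)) := by
    intro u t h
    rw [hred u t h, j.map_smul, map_smul]
  have hredval : ∀ (u t : S) (a : A) (h : H),
      adjoint (Ut (φ t)) (j (π (α t a) h))
        = (starRingEnd ℂ) (μ (φ u) (φ t)) • adjoint (Ut (φ (u * t))) (j (π (α (u * t) a) (V u h))) := by
    intro u t a h
    rw [hred u t (π (α t a) h), hπα' u t a h]
  -- ## well-definedness of the would-be operator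
  have hwd : ∀ (a : A) (t t' : S) (h h' : H),
      adjoint (Ut (φ t)) (j h) = adjoint (Ut (φ t')) (j h') →
      adjoint (Ut (φ t)) (j (π (α t a) h)) = adjoint (Ut (φ t')) (j (π (α t' a) h')) := by
    intro a t t' h h' heq
    obtain ⟨u, v, huv⟩ := hOre t t'
    rw [hred u t h, hred v t' h', huv] at heq
    have heq2 : (starRingEnd ℂ) (μ (φ u) (φ t)) • V u h
        = (starRingEnd ℂ) (μ (φ v) (φ t')) • V v h' := by
      apply j.injective
      apply hUa_inj (φ (v * t'))
      simpa [map_smul] using heq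
    have h3 := congrArg (fun x : H => π (α (v * t') a) x) heq2
    simp only [map_smul] at h3
    have hmv : ∀ (c : ℂ) (x : H),
        c • adjoint (Ut (φ (v * t'))) (j x) = adjoint (Ut (φ (v * t'))) (j (c • x)) := by
      intro c x; rw [j.map_smul, map_smul]
    rw [hredval u t a h, hredval v t' a h', huv, hmv, hmv, h3]
  -- ## the dense subspace of 𝓗
  have hjE : ∀ (t : S) (x : H), adjoint (Ut (φ t)) (j (V t x)) = j x := by
    intro t x; rw [← hUt_dil, hUaUt]
  set Eset : Set 𝓗 := ⋃ t : S, adjoint (Ut (φ t)) '' Set.range j with hEset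
  have hEdense : Dense Eset := hUt_min
  have hEmem : ∀ {ξ : 𝓗}, ξ ∈ Eset → ∃ (t : S) (h : H), adjoint (Ut (φ t)) (j h) = ξ := by
    intro ξ hξ
    simp only [hEset, Set.mem_iUnion, Set.mem_image, Set.mem_range] at hξ
    obtain ⟨t, x, ⟨h, rfl⟩, e⟩ := hξ
    exact ⟨t, h, e⟩
  have hEmem' : ∀ (t : S) (h : H), adjoint (Ut (φ t)) (j h) ∈ Eset := by
    intro t h
    exact Set.mem_iUnion.mpr ⟨t, Set.mem_image_of_mem _ ⟨h, rfl⟩⟩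
  have hEcommon : ∀ {ξ ζ : 𝓗}, ξ ∈ Eset → ζ ∈ Eset → ∃ (r : S) (k k' : H),
      adjoint (Ut (φ r)) (j k) = ξ ∧ adjoint (Ut (φ r)) (j k') = ζ := by
    intro ξ ζ hξ hζ
    obtain ⟨t, h, rfl⟩ := hEmem hξ
    obtain ⟨t', h', rfl⟩ := hEmem hζ
    obtain ⟨u, v, huv⟩ := hOre t t'
    refine ⟨u * t, (starRingEnd ℂ) (μ (φ u) (φ t)) • V u h,
      (starRingEnd ℂ) (μ (φ v) (φ t')) • V v h', ?_, ?_⟩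
    · rw [← hredj u t h]
    · rw [huv, ← hredj v t' h']
  -- ## the submodule
  let 𝓔 : Submodule ℂ 𝓗 :=
    { carrier := Eset
      add_mem' := by
        intro ξ ζ hξ hζ
        obtain ⟨r, k, k', h1, h2⟩ := hEcommon hξ hζ
        rw [← h1, ← h2, ← map_add, ← j.map_add]
        exact hEmem' r (k + k')
      zero_mem' := by
        simpa using hEmem' s₀ 0
      smul_mem' := by
        intro c ξ hξ
        obtain ⟨t, h, rfl⟩ := hEmem hξ
        rw [← map_smul, ← j.map_smul]
        exact hEmem' t (c • h) }
  have hEcoe : ∀ ξ : 𝓔, (ξ : 𝓗) ∈ Eset := fun ξ => ξ.2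
  -- choice of representatives
  have hrep : ∀ ξ : 𝓔, ∃ p : S × H, adjoint (Ut (φ p.1)) (j p.2) = (ξ : 𝓗) := by
    intro ξ
    obtain ⟨t, h, e⟩ := hEmem (hEcoe ξ)
    exact ⟨(t, h), e⟩
  choose rp hrp using hrep
  -- the linear maps `L a` on 𝓔
  have hLex : ∀ a : A, ∃ L : 𝓔 →ₗ[ℂ] 𝓗, ∀ (ξ : 𝓔) (t : S) (h : H),
      adjoint (Ut (φ t)) (j h) = (ξ : 𝓗) → L ξ = adjoint (Ut (φ t)) (j (π (α t a) h)) := by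
    intro a
    have hval : ∀ (ξ : 𝓔) (t : S) (h : H), adjoint (Ut (φ t)) (j h) = (ξ : 𝓗) →
        adjoint (Ut (φ (rp ξ).1)) (j (π (α (rp ξ).1 a) (rp ξ).2))
          = adjoint (Ut (φ t)) (j (π (α t a) h)) := by
      intro ξ t h he
      exact hwd a _ t _ h (by rw [hrp ξ, ← he])
    refine ⟨{ toFun := fun ξ => adjoint (Ut (φ (rp ξ).1)) (j (π (α (rp ξ).1 a) (rp ξ).2))
              map_add' := ?_
              map_smul' := ?_ }, fun ξ t h he => hval ξ t h he⟩
    · intro ξ ζ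
      obtain ⟨r, k, k', h1, h2⟩ := hEcommon (hEcoe ξ) (hEcoe ζ)
      have hsum : adjoint (Ut (φ r)) (j (k + k')) = ((ξ + ζ : 𝓔) : 𝓗) := by
        rw [j.map_add, map_add, h1, h2]; rfl
      rw [hval (ξ + ζ) r (k + k') hsum, hval ξ r k h1, hval ζ r k' h2]
      simp [map_add]
    · intro c ξ
      obtain ⟨t, h, he⟩ := hEmem (hEcoe ξ)
      have hs : adjoint (Ut (φ t)) (j (c • h)) = ((c • ξ : 𝓔) : 𝓗) := by
        rw [j.map_smul, map_smul, he]; rfl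
      rw [hval (c • ξ) t (c • h) hs, hval ξ t h he]
      simp [map_smul]
  choose L hL using hLex
  -- extension data
  have hdR : DenseRange (𝓔.subtypeL : 𝓔 →L[ℂ] 𝓗) := hEdense.denseRange_val
  have hui : IsUniformInducing (𝓔.subtypeL : 𝓔 →L[ℂ] 𝓗) :=
    isUniformEmbedding_subtype_val.isUniformInducing
  -- the operators ρ a
  have hρex : ∀ a : A, ∃ ρa : 𝓗 →L[ℂ] 𝓗,
      (∀ (t : S) (h : H), ρa (adjoint (Ut (φ t)) (j h)) = adjoint (Ut (φ t)) (j (π (α t a) h)))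
      ∧ ‖ρa‖ ≤ ‖a‖ := by
    intro a
    have hb : ∀ ξ : 𝓔, ‖L a ξ‖ ≤ ‖a‖ * ‖ξ‖ := by
      intro ξ
      have hv := hL a ξ (rp ξ).1 (rp ξ).2 (hrp ξ)
      have hn : ‖(ξ : 𝓗)‖ = ‖(rp ξ).2‖ := by
        rw [← hrp ξ, hUa_isom, j.norm_map]
      calc ‖L a ξ‖ = ‖π (α (rp ξ).1 a) (rp ξ).2‖ := by rw [hv, hUa_isom, j.norm_map]
        _ ≤ ‖π (α (rp ξ).1 a)‖ * ‖(rp ξ).2‖ := le_opNorm _ _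
        _ ≤ ‖a‖ * ‖(rp ξ).2‖ := by
            refine mul_le_mul_of_nonneg_right ?_ (norm_nonneg _)
            calc ‖π (α (rp ξ).1 a)‖ ≤ ‖α (rp ξ).1 a‖ := hπle _
              _ = ‖a‖ := hαn _ _
        _ = ‖a‖ * ‖ξ‖ := by rw [show ‖ξ‖ = ‖(ξ : 𝓗)‖ from rfl, hn]
    refine ⟨ContinuousLinearMap.extend ((L a).mkContinuous ‖a‖ hb) 𝓔.subtypeL, ?_, ?_⟩
    · intro t h
      have hmem : adjoint (Ut (φ t)) (j h) ∈ 𝓔 := hEmem' t h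
      have he : adjoint (Ut (φ t)) (j h) = 𝓔.subtypeL ⟨_, hmem⟩ := rfl
      rw [he, ContinuousLinearMap.extend_eq _ hdR hui, LinearMap.mkContinuous_apply]
      exact hL a ⟨_, hmem⟩ t h rfl
    · have h1 : ∀ ξ : 𝓔, ‖ξ‖ ≤ ((1 : NNReal) : ℝ) * ‖(𝓔.subtypeL : 𝓔 →L[ℂ] 𝓗) ξ‖ := by
        intro ξ; simp [Submodule.subtypeL_apply]
      calc ‖ContinuousLinearMap.extend ((L a).mkContinuous ‖a‖ hb) 𝓔.subtypeL‖
          = ‖ContinuousLinearMap.extend ((L a).mkContinuous ‖a‖ hb) 𝓔.subtypeL‖ := rfl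
        _ ≤ (1 : NNReal) * ‖(L a).mkContinuous ‖a‖ hb‖ :=
            ContinuousLinearMap.opNorm_extend_le _ hdR h1
        _ ≤ ‖a‖ := by
            rw [NNReal.coe_one, one_mul]
            exact LinearMap.mkContinuous_norm_le _ (norm_nonneg a) _
  choose ρ hρval hρnorm using hρex
  -- extensionality on the dense set
  have hext : ∀ T R : 𝓗 →L[ℂ] 𝓗,
      (∀ (t : S) (h : H), T (adjoint (Ut (φ t)) (j h)) = R (adjoint (Ut (φ t)) (j h))) → T = R := by
    intro T R hTR
    apply ContinuousLinearMap.coeFn_injective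
    refine Continuous.ext_on hEdense T.continuous R.continuous ?_
    rintro ξ hξ
    obtain ⟨t, h, rfl⟩ := hEmem hξ
    exact hTR t h
  -- multiplicativity of ρ
  have hρmul : ∀ a a' : A, ρ a ∘L ρ a' = ρ (a * a') := by
    intro a a'
    apply hext
    intro t h
    rw [ContinuousLinearMap.comp_apply, hρval a' t h, hρval a t _, hρval (a * a') t h]
    congr 1
    congr 1
    rw [← ContinuousLinearMap.comp_apply, ← ContinuousLinearMap.mul_def, ← map_mul, ← map_mul]
  -- ρ 1 fixes j H
  have hρone : ∀ x : H, ρ 1 (j x) = j x := by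
    intro x
    rw [← hjE s₀ x, hρval 1 s₀ (V s₀ x)]
    have : π (α s₀ (1 : A)) (V s₀ x) = V s₀ x := by
      calc π (α s₀ (1 : A)) (V s₀ x) = V s₀ (π 1 x) := hπα s₀ 1 x
        _ = V s₀ x := by rw [map_one]; rfl
    rw [this]
  -- star property of ρ
  have hρstar : ∀ a : A, ρ (star a) = adjoint (ρ a) := by
    intro a
    rw [ContinuousLinearMap.eq_adjoint_iff]
    intro x y
    have key : ∀ p : 𝓗 × 𝓗, p ∈ Eset ×ˢ Eset →
        inner ℂ (ρ (star a) p.1) p.2 = inner ℂ p.1 (ρ a p.2) := by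
      rintro ⟨ξ, ζ⟩ ⟨hξ, hζ⟩
      obtain ⟨r, k, k', h1, h2⟩ := hEcommon hξ hζ
      dsimp only at *
      rw [← h1, ← h2, hρval a r k', hρval (star a) r k, hUa_inner, hUa_inner,
        j.inner_map_map, j.inner_map_map]
      rw [map_star, map_star, ContinuousLinearMap.star_eq_adjoint]
      exact ContinuousLinearMap.adjoint_inner_left _ _ _
    have hcont1 : Continuous fun p : 𝓗 × 𝓗 => inner ℂ (ρ (star a) p.1) p.2 :=
      Continuous.inner ((ρ (star a)).continuous.comp continuous_fst) continuous_snd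
    have hcont2 : Continuous fun p : 𝓗 × 𝓗 => inner ℂ p.1 (ρ a p.2) :=
      Continuous.inner continuous_fst ((ρ a).continuous.comp continuous_snd)
    have := Continuous.ext_on (hEdense.prod hEdense) hcont1 hcont2 key
    exact congrFun this (x, y)
  -- additivity of ρ in a
  have hρadd : ∀ a a' : A, ρ (a + a') = ρ a + ρ a' := by
    intro a a'
    apply hext
    intro t h
    rw [ContinuousLinearMap.add_apply, hρval, hρval, hρval, map_add, map_add,
      ContinuousLinearMap.add_apply, j.map_add, map_add]
  have hρsmul : ∀ (c : ℂ) (a : A), ρ (c • a) = c • ρ a := by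
    intro c a
    apply hext
    intro t h
    rw [ContinuousLinearMap.smul_apply, hρval, hρval, map_smul, map_smul,
      ContinuousLinearMap.smul_apply, j.map_smul, map_smul]
  -- covariance of ρ
  have hρcov : ∀ (u : S) (a : A), ρ (α u a) = Ut (φ u) ∘L ρ a ∘L adjoint (Ut (φ u)) := by
    intro u a
    apply hext
    intro t h
    have e2 : adjoint (Ut (φ u)) (adjoint (Ut (φ t)) (j h))
        = (starRingEnd ℂ) (μ (φ t) (φ u)) • adjoint (Ut (φ (t * u))) (j h) := by
      have h4 := congrArg (fun T : 𝓗 →L[ℂ] 𝓗 => T (j h)) (hUt_rep_adj (φ t) (φ u))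
      simp only [ContinuousLinearMap.comp_apply, ContinuousLinearMap.smul_apply] at h4
      rw [← map_mul] at h4
      exact h4
    have e3 : ∀ y : 𝓗, (starRingEnd ℂ) (μ (φ t) (φ u)) • Ut (φ u) (adjoint (Ut (φ (t * u))) y)
        = adjoint (Ut (φ t)) y := by
      intro y
      have h4 := congrArg (fun T : 𝓗 →L[ℂ] 𝓗 => Ut (φ u) (T y)) (hUt_rep_adj (φ t) (φ u))
      simp only [ContinuousLinearMap.comp_apply, ContinuousLinearMap.smul_apply, map_smul,
        hUtUa] at h4
      rw [← map_mul] at h4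
      exact h4.symm
    rw [ContinuousLinearMap.comp_apply, ContinuousLinearMap.comp_apply, e2]
    rw [map_smul, hρval a (t * u) h, map_smul, e3, hρval (α u a) t h, hα_mul]
  -- the sandwich lemma
  have hsand : ∀ (c : ℂ) (X Y M : 𝓗 →L[ℂ] 𝓗), ‖c‖ = 1 → c • Y = X →
      ∀ z : 𝓗, adjoint Y (M (Y z)) = adjoint X (M (X z)) := by
    intro c X Y M hc he z
    rw [← he, hadj_smul]
    simp only [ContinuousLinearMap.smul_apply, map_smul, smul_smul]
    rw [mul_comm, hconj c hc, one_smul]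
  -- ## the B side
  set gg : S → A → B := fun s a => (β (φ s)).symm (i a) with hgg
  set FF : S → A → (𝓗 →L[ℂ] 𝓗) := fun s a => adjoint (Ut (φ s)) ∘L ρ a ∘L Ut (φ s) with hFF
  have hβ0 : ∀ b : B, β (1 : G) b = b := by
    intro b
    have h1 : β 1 (β 1 b) = β 1 b := by rw [hβ_mul, one_mul]
    exact (β 1).injective h1
  have hβsymm : ∀ (g : G) (b : B), (β g).symm b = β g⁻¹ b := by
    intro g b
    apply (β g).injective
    show β g ((β g).symm b) = β g (β g⁻¹ b)
    rw [StarAlgEquiv.apply_symm_apply, hβ_mul, mul_inv_cancel, hβ0]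
  have hggcompat : ∀ (u s : S) (a : A), gg (u * s) (α u a) = gg s a := by
    intro u s a
    rw [hgg]; dsimp only
    apply (β (φ (u * s))).injective
    show β (φ (u * s)) ((β (φ (u * s))).symm (i (α u a)))
      = β (φ (u * s)) ((β (φ s)).symm (i a))
    rw [StarAlgEquiv.apply_symm_apply, ← hdil u a, map_mul, ← hβ_mul,
      StarAlgEquiv.apply_symm_apply]
  have hggnorm : ∀ (s : S) (a : A), ‖gg s a‖ = ‖a‖ := by
    intro s a
    rw [hgg]; dsimp only
    rw [NonUnitalStarAlgHom.norm_map ((β (φ s)).symm) (β (φ s)).symm.injective,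
      NonUnitalStarAlgHom.norm_map i hi_inj]
  have hgg_inj : ∀ s : S, Function.Injective (gg s) := by
    intro s a a' h
    rw [hgg] at h; dsimp only at h
    exact hi_inj ((β (φ s)).symm.injective h)
  -- FF compatibility
  have hFFcompat : ∀ (u s : S) (a : A), FF (u * s) (α u a) = FF s a := by
    intro u s a
    have h6 : adjoint (Ut (φ u)) ∘L (Ut (φ u) ∘L Ut (φ s)) = Ut (φ s) := by
      rw [← ContinuousLinearMap.comp_assoc, (hUt_unitary (φ u)).2,
        ContinuousLinearMap.one_def, ContinuousLinearMap.id_comp]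
    have hZ : μ (φ u) (φ s) • (adjoint (Ut (φ u)) ∘L Ut (φ (u * s))) = Ut (φ s) := by
      rw [← h6, hUt_rep (φ u) (φ s), ← map_mul, ContinuousLinearMap.comp_smul]
    ext z
    rw [hFF]; dsimp only
    simp only [ContinuousLinearMap.comp_apply]
    rw [hρcov u a]
    simp only [ContinuousLinearMap.comp_apply]
    have := hsand (μ (φ u) (φ s)) (Ut (φ s)) (adjoint (Ut (φ u)) ∘L Ut (φ (u * s)))
      (ρ a) (hμ_norm _ _) hZ z
    simpa only [ContinuousLinearMap.comp_apply, ContinuousLinearMap.adjoint_comp,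
      adjoint_adjoint] using this
  have hFFnorm : ∀ (s : S) (a : A), ‖FF s a‖ ≤ ‖a‖ := by
    intro s a
    rw [hFF]; dsimp only
    refine ContinuousLinearMap.opNorm_le_bound _ (norm_nonneg a) ?_
    intro z
    simp only [ContinuousLinearMap.comp_apply]
    rw [hUa_isom]
    have hUz : ‖Ut (φ s) z‖ = ‖z‖ :=
      (ContinuousLinearMap.norm_map_iff_adjoint_comp_self (Ut (φ s))).mpr (hUt_unitary (φ s)).2 z
    calc ‖ρ a (Ut (φ s) z)‖ ≤ ‖ρ a‖ * ‖Ut (φ s) z‖ := le_opNorm _ _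
      _ ≤ ‖a‖ * ‖z‖ := by rw [hUz]; exact mul_le_mul_of_nonneg_right (hρnorm a) (norm_nonneg z)
  have hFFadd : ∀ (s : S) (a a' : A), FF s (a + a') = FF s a + FF s a' := by
    intro s a a'
    ext z
    rw [hFF]; dsimp only
    simp only [ContinuousLinearMap.comp_apply, ContinuousLinearMap.add_apply, hρadd,
      map_add]
  have hFFsmul : ∀ (s : S) (c : ℂ) (a : A), FF s (c • a) = c • FF s a := by
    intro s c a
    ext z
    rw [hFF]; dsimp only
    simp only [ContinuousLinearMap.comp_apply, ContinuousLinearMap.smul_apply, hρsmul,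
      map_smul]
  have hFFstar : ∀ (s : S) (a : A), FF s (star a) = star (FF s a) := by
    intro s a
    rw [hFF]; dsimp only
    rw [hρstar, ContinuousLinearMap.star_eq_adjoint, ContinuousLinearMap.adjoint_comp,
      ContinuousLinearMap.adjoint_comp, adjoint_adjoint, ContinuousLinearMap.comp_assoc]
  -- the dense subspace of B
  set Dset : Set B := ⋃ s : S, (β (φ s)).symm '' Set.range i with hDset
  have hDdense : Dense Dset := hmin
  have hDmem : ∀ {b : B}, b ∈ Dset → ∃ (s : S) (a : A), gg s a = b := by
    intro b hb
    simp only [hDset, Set.mem_iUnion, Set.mem_image, Set.mem_range] at hb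
    obtain ⟨s, x, ⟨a, rfl⟩, e⟩ := hb
    exact ⟨s, a, e⟩
  have hDmem' : ∀ (s : S) (a : A), gg s a ∈ Dset := by
    intro s a
    exact Set.mem_iUnion.mpr ⟨s, Set.mem_image_of_mem _ ⟨a, rfl⟩⟩
  have hDcommon : ∀ {b b' : B}, b ∈ Dset → b' ∈ Dset →
      ∃ (r : S) (c c' : A), gg r c = b ∧ gg r c' = b' := by
    intro b b' hb hb'
    obtain ⟨s, a, rfl⟩ := hDmem hb
    obtain ⟨s', a', rfl⟩ := hDmem hb'
    obtain ⟨u, v, huv⟩ := hOre s s'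
    exact ⟨u * s, α u a, α v a', hggcompat u s a, by rw [huv]; exact hggcompat v s' a'⟩
  have hDwd : ∀ {s s' : S} {a a' : A}, gg s a = gg s' a' → FF s a = FF s' a' := by
    intro s s' a a' h
    obtain ⟨u, v, huv⟩ := hOre s s'
    have h1 : gg (u * s) (α u a) = gg (u * s) (α v a') := by
      rw [hggcompat u s a, h, huv, hggcompat v s' a']
    have h2 := hgg_inj (u * s) h1
    calc FF s a = FF (u * s) (α u a) := (hFFcompat u s a).symm
      _ = FF (u * s) (α v a') := by rw [h2]
      _ = FF s' a' := by rw [huv]; exact hFFcompat v s' a'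
  have hggadd : ∀ (s : S) (a a' : A), gg s a + gg s a' = gg s (a + a') := by
    intro s a a'
    rw [hgg]; dsimp only
    rw [← map_add, ← map_add]
  have hggsmul : ∀ (s : S) (c : ℂ) (a : A), c • gg s a = gg s (c • a) := by
    intro s c a
    rw [hgg]; dsimp only
    rw [← map_smul, ← map_smul]
  let 𝓓 : Submodule ℂ B :=
    { carrier := Dset
      add_mem' := by
        intro b b' hb hb'
        obtain ⟨r, c, c', h1, h2⟩ := hDcommon hb hb'
        rw [← h1, ← h2, hggadd]
        exact hDmem' r (c + c')
      zero_mem' := by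
        have h0 : gg s₀ (0 : A) = 0 := by rw [hgg]; dsimp only; rw [map_zero, map_zero]
        have := hDmem' s₀ 0
        rwa [h0] at this
      smul_mem' := by
        intro c b hb
        obtain ⟨s, a, rfl⟩ := hDmem hb
        rw [hggsmul]
        exact hDmem' s (c • a) }
  have hDcoe : ∀ d : 𝓓, (d : B) ∈ Dset := fun d => d.2
  have hrepD : ∀ d : 𝓓, ∃ p : S × A, gg p.1 p.2 = (d : B) := by
    intro d
    obtain ⟨s, a, e⟩ := hDmem (hDcoe d)
    exact ⟨(s, a), e⟩
  choose rpD hrpD using hrepD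
  have hLDex : ∃ LD : 𝓓 →ₗ[ℂ] (𝓗 →L[ℂ] 𝓗), ∀ (d : 𝓓) (s : S) (a : A),
      gg s a = (d : B) → LD d = FF s a := by
    have hvalD : ∀ (d : 𝓓) (s : S) (a : A), gg s a = (d : B) →
        FF (rpD d).1 (rpD d).2 = FF s a := by
      intro d s a he
      exact hDwd (by rw [hrpD d, ← he])
    refine ⟨{ toFun := fun d => FF (rpD d).1 (rpD d).2
              map_add' := ?_
              map_smul' := ?_ }, fun d s a he => hvalD d s a he⟩
    · intro d d'
      obtain ⟨r, c, c', h1, h2⟩ := hDcommon (hDcoe d) (hDcoe d')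
      have hsum : gg r (c + c') = ((d + d' : 𝓓) : B) := by
        rw [← hggadd, h1, h2]; rfl
      rw [hvalD (d + d') r (c + c') hsum, hvalD d r c h1, hvalD d' r c' h2, hFFadd]
    · intro c d
      obtain ⟨s, a, he⟩ := hDmem (hDcoe d)
      have hs : gg s (c • a) = ((c • d : 𝓓) : B) := by
        rw [← hggsmul, he]; rfl
      rw [hvalD (c • d) s (c • a) hs, hvalD d s a he, hFFsmul]
      rfl
  obtain ⟨LD, hLD⟩ := hLDex
  have hdRD : DenseRange (𝓓.subtypeL : 𝓓 →L[ℂ] B) := hDdense.denseRange_val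
  have huiD : IsUniformInducing (𝓓.subtypeL : 𝓓 →L[ℂ] B) :=
    isUniformEmbedding_subtype_val.isUniformInducing
  have hbD : ∀ d : 𝓓, ‖LD d‖ ≤ 1 * ‖d‖ := by
    intro d
    rw [hLD d (rpD d).1 (rpD d).2 (hrpD d), one_mul]
    calc ‖FF (rpD d).1 (rpD d).2‖ ≤ ‖(rpD d).2‖ := hFFnorm _ _
      _ = ‖(d : B)‖ := by rw [← hrpD d, hggnorm]
      _ = ‖d‖ := rfl
  set πt0 : B →L[ℂ] (𝓗 →L[ℂ] 𝓗) :=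
    ContinuousLinearMap.extend (LD.mkContinuous 1 hbD) 𝓓.subtypeL with hπt0
  have hπt0val : ∀ (s : S) (a : A), πt0 (gg s a) = FF s a := by
    intro s a
    have hmem : gg s a ∈ 𝓓 := hDmem' s a
    have he : gg s a = 𝓓.subtypeL ⟨_, hmem⟩ := rfl
    rw [hπt0, he, ContinuousLinearMap.extend_eq _ hdRD huiD, LinearMap.mkContinuous_apply]
    exact hLD ⟨_, hmem⟩ s a rfl
  have hextD : ∀ (f1 f2 : B → (𝓗 →L[ℂ] 𝓗)), Continuous f1 → Continuous f2 →
      (∀ (s : S) (a : A), f1 (gg s a) = f2 (gg s a)) → ∀ b, f1 b = f2 b := by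
    intro f1 f2 hc1 hc2 hfg b
    have heq : Set.EqOn f1 f2 Dset := by
      intro b' hb'
      obtain ⟨s, a, rfl⟩ := hDmem hb'
      exact hfg s a
    exact congrFun (Continuous.ext_on hDdense hc1 hc2 heq) b
  -- pointwise projective representation relation
  have hrep_ap : ∀ (g1 g2 : G) (z : 𝓗), Ut g1 (Ut g2 z) = μ g1 g2 • Ut (g1 * g2) z := by
    intro g1 g2 z
    have := congrArg (fun T : 𝓗 →L[ℂ] 𝓗 => T z) (hUt_rep g1 g2)
    simpa using this
  have hlcan : ∀ (g0 : G) (T R : 𝓗 →L[ℂ] 𝓗), Ut g0 ∘L T = Ut g0 ∘L R → T = R := by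
    intro g0 T R h
    ext z
    have := congrArg (fun X : 𝓗 →L[ℂ] 𝓗 => adjoint (Ut g0) (X z)) h
    simpa only [ContinuousLinearMap.comp_apply, hUaUt] using this
  have hrcan : ∀ (g0 : G) (T R : 𝓗 →L[ℂ] 𝓗), T ∘L Ut g0 = R ∘L Ut g0 → T = R := by
    intro g0 T R h
    ext z
    have := congrArg (fun X : 𝓗 →L[ℂ] 𝓗 => X (adjoint (Ut g0) z)) h
    simpa only [ContinuousLinearMap.comp_apply, hUtUa] using this
  -- ## covariance
  have hπt0cov : ∀ (g : G) (b : B), πt0 (β g b) = Ut g ∘L πt0 b ∘L adjoint (Ut g) := by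
    intro g
    have hβc : Continuous (β g : B → B) :=
      (NonUnitalStarAlgHom.isometry (β g) (β g).injective).continuous
    have hc1 : Continuous fun b : B => πt0 (β g b) := πt0.continuous.comp hβc
    have hc2 : Continuous fun b : B => Ut g ∘L πt0 b ∘L adjoint (Ut g) := by
      have heq : (fun b : B => Ut g ∘L πt0 b ∘L adjoint (Ut g))
          = fun b : B => Ut g * (πt0 b * adjoint (Ut g)) := rfl
      rw [heq]
      exact continuous_const.mul (πt0.continuous.mul continuous_const)
    intro b
    refine hextD _ _ hc1 hc2 ?_ b
    intro s a
    obtain ⟨p, q, hpq⟩ := hgen (g * (φ s)⁻¹)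
    have hφpg : φ p * g = φ q * φ s := by
      have h1 : g = (φ p)⁻¹ * φ q * φ s := by
        rw [← hpq]
        group
      rw [h1]
      group
    have hβg : β g (gg s a) = gg p (α q a) := by
      rw [hgg]; dsimp only
      rw [hβsymm, hβsymm, hβ_mul, ← hdil q a, hβ_mul, hpq]
    rw [hβg, hπt0val, hπt0val]
    have hμqs_ne : μ (φ q) (φ s) ≠ 0 := by
      intro h0
      have := hμ_norm (φ q) (φ s)
      rw [h0] at this
      simpa using this
    have hQP : μ (φ p) g • (Ut (φ s) ∘L adjoint (Ut g))
        = μ (φ q) (φ s) • (adjoint (Ut (φ q)) ∘L Ut (φ p)) := by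
      apply hlcan (φ q)
      apply hrcan g
      ext z
      simp only [ContinuousLinearMap.comp_apply, ContinuousLinearMap.smul_apply, map_smul,
        hUaUt, hUtUa, hrep_ap, smul_smul]
      rw [hφpg, mul_comm]
    have hc : ‖(μ (φ q) (φ s))⁻¹ * μ (φ p) g‖ = 1 := by
      rw [norm_mul, norm_inv, hμ_norm, hμ_norm]
      norm_num
    have hYX : ((μ (φ q) (φ s))⁻¹ * μ (φ p) g) • (Ut (φ s) ∘L adjoint (Ut g))
        = adjoint (Ut (φ q)) ∘L Ut (φ p) := by
      have h2 := congrArg (fun T : 𝓗 →L[ℂ] 𝓗 => (μ (φ q) (φ s))⁻¹ • T) hQP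
      rwa [smul_smul, smul_smul, inv_mul_cancel₀ hμqs_ne, one_smul] at h2
    ext z
    rw [hFF]; dsimp only
    simp only [ContinuousLinearMap.comp_apply]
    rw [hρcov q a]
    simp only [ContinuousLinearMap.comp_apply]
    have hfin := hsand _ (adjoint (Ut (φ q)) ∘L Ut (φ p)) (Ut (φ s) ∘L adjoint (Ut g))
      (ρ a) hc hYX z
    simpa only [ContinuousLinearMap.comp_apply, ContinuousLinearMap.adjoint_comp,
      adjoint_adjoint] using hfin.symm
  -- ## multiplicativity
  have hπt0mul : ∀ b b' : B, πt0 (b * b') = πt0 b * πt0 b' := by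
    have key : ∀ p : B × B, p ∈ Dset ×ˢ Dset → πt0 (p.1 * p.2) = πt0 p.1 * πt0 p.2 := by
      rintro ⟨b, b'⟩ ⟨hb, hb'⟩
      dsimp only at *
      obtain ⟨r, c, c', h1, h2⟩ := hDcommon hb hb'
      rw [← h1, ← h2]
      have hggm : gg r c * gg r c' = gg r (c * c') := by
        rw [hgg]; dsimp only
        rw [← map_mul, ← map_mul]
      rw [hggm, hπt0val, hπt0val, hπt0val]
      ext z
      rw [hFF]; dsimp only
      simp only [ContinuousLinearMap.mul_apply, ContinuousLinearMap.comp_apply, hUaUt, hUtUa]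
      rw [← hρmul, ContinuousLinearMap.comp_apply]
    intro b b'
    have hc1 : Continuous fun p : B × B => πt0 (p.1 * p.2) :=
      πt0.continuous.comp (continuous_fst.mul continuous_snd)
    have hc2 : Continuous fun p : B × B => πt0 p.1 * πt0 p.2 :=
      (πt0.continuous.comp continuous_fst).mul (πt0.continuous.comp continuous_snd)
    exact congrFun (Continuous.ext_on (hDdense.prod hDdense) hc1 hc2 key) (b, b')
  -- ## star preservation
  have hπt0star : ∀ b : B, πt0 (star b) = star (πt0 b) := by
    refine hextD _ _ (πt0.continuous.comp continuous_star)
      (continuous_star.comp πt0.continuous) ?_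
    intro s a
    have hggs : star (gg s a) = gg s (star a) := by
      rw [hgg]; dsimp only
      rw [← map_star, ← map_star]
    show πt0 (star (gg s a)) = star (πt0 (gg s a))
    rw [hggs, hπt0val, hπt0val, ← hFFstar]
  -- ## nondegeneracy
  have hπt0_1 : ∀ (t : S) (h : H),
      πt0 (gg t 1) (adjoint (Ut (φ t)) (j h)) = adjoint (Ut (φ t)) (j h) := by
    intro t h
    rw [hπt0val, hFF]; dsimp only
    simp only [ContinuousLinearMap.comp_apply]
    rw [hUtUa, hρone]
  -- ## compatibility with i and π
  have hπt0i : ∀ (a : A) (h : H), πt0 (i a) (j h) = j (π a h) := by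
    intro a h
    have hia : gg s₀ (α s₀ a) = i a := by
      rw [hgg]; dsimp only
      rw [← hdil s₀ a, StarAlgEquiv.symm_apply_apply]
    rw [← hia, hπt0val, hFF]; dsimp only
    simp only [ContinuousLinearMap.comp_apply]
    rw [hUt_dil, ← hjE s₀ (V s₀ h), hρval]
    have h2 : π (α s₀ (α s₀ a)) (V s₀ (V s₀ h)) = V s₀ (V s₀ (π a h)) := by
      rw [hπα s₀ (α s₀ a) (V s₀ h), hπα s₀ a h]
    rw [h2, hjE s₀ (V s₀ (π a h)), hjE s₀ (π a h)]
  -- ## packaging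
  refine ⟨{ toFun := πt0
            map_smul' := fun c b => map_smul πt0 c b
            map_zero' := map_zero πt0
            map_add' := fun b b' => map_add πt0 b b'
            map_mul' := hπt0mul
            map_star' := hπt0star }, ?_, ?_, ?_⟩
  · refine Dense.mono ?_ hEdense
    intro ξ hξ
    obtain ⟨t, h, rfl⟩ := hEmem hξ
    refine Submodule.subset_span ?_
    exact ⟨gg t 1, adjoint (Ut (φ t)) (j h), hπt0_1 t h⟩
  · intro g b
    exact hπt0cov g b
  · intro a h
    exact hπt0i a h
end

section
/- Every finite adele of ℚ is an integral adele divided by a positive integer: for every element a of the finite adele ring 𝔸_f of ℚ, there exists a positive natural number n such that n·a is integral, i.e. for every prime p the p-component of n·a lies in the ring of p-adic integers ℤ_p. -/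
open IsDedekindDomain

/-- **Every finite adele of ℚ is an integral adele divided by a positive integer.**
For every element `a` of the finite adele ring `𝔸_f` of `ℚ` there is a positive
natural number `n` such that `n • a` is integral, i.e. for every prime (finite
place) `v` of `ℚ` the `v`-component of `n • a` lies in the ring of `v`-adic
integers. -/
theorem finiteAdele_eq_integral_div_nat (a : FiniteAdeleRing ℤ ℚ) :
    ∃ n : ℕ, 0 < n ∧
      ∀ v : HeightOneSpectrum ℤ,
        ((n : FiniteAdeleRing ℤ ℚ) * a) v ∈ v.adicCompletionIntegers ℚ := by
  obtain ⟨b, hmem⟩ : ∃ b : nonZeroDivisors ℤ, ∀ v : HeightOneSpectrum ℤ,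
      (a * algebraMap ℤ (FiniteAdeleRing ℤ ℚ) (b : ℤ)) v ∈ v.adicCompletionIntegers ℚ := by
    have hfin : Set.Finite {v : HeightOneSpectrum ℤ | a v ∉ v.adicCompletionIntegers ℚ} :=
      Filter.eventually_cofinite.1 a.2
    choose f hf hf' using fun v : HeightOneSpectrum ℤ =>
      HeightOneSpectrum.adicCompletion.mul_nonZeroDivisor_mem_adicCompletionIntegers v (a v)
    refine ⟨⟨∏ v ∈ hfin.toFinset, f v, prod_mem (fun v _ => hf v)⟩, fun v => ?_⟩
    have key : ∀ r : ℤ, (algebraMap ℤ (FiniteAdeleRing ℤ ℚ) r) v = algebraMap ℤ (v.adicCompletion ℚ) r ∧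
        algebraMap ℤ (v.adicCompletion ℚ) r ∈ v.adicCompletionIntegers ℚ := fun r =>
      ⟨rfl, by
        rw [IsScalarTower.algebraMap_apply ℤ (v.adicCompletionIntegers ℚ) (v.adicCompletion ℚ)]
        exact (algebraMap ℤ (v.adicCompletionIntegers ℚ) r).2⟩
    change a v * (algebraMap ℤ (FiniteAdeleRing ℤ ℚ) (∏ w ∈ hfin.toFinset, f w)) v ∈ _
    rw [(key _).1]
    classical
    by_cases hv : v ∈ hfin.toFinset
    · rw [← Finset.mul_prod_erase _ _ hv, map_mul, ← mul_assoc]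
      exact mul_mem (hf' v) (key _).2
    · exact mul_mem (by simpa using hv) (key _).2
  have hb0 : (b : ℤ) ≠ 0 := nonZeroDivisors.coe_ne_zero b
  refine ⟨(b : ℤ).natAbs, Int.natAbs_pos.2 hb0, fun v => ?_⟩
  have hcast : ((((b : ℤ).natAbs : ℕ) : FiniteAdeleRing ℤ ℚ)) =
      algebraMap ℤ (FiniteAdeleRing ℤ ℚ) (((b : ℤ).natAbs : ℤ)) :=
    (map_natCast (algebraMap ℤ (FiniteAdeleRing ℤ ℚ)) (b : ℤ).natAbs).symm
  rcases Int.natAbs_eq (b : ℤ) with hb | hb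
  · have : ((((b : ℤ).natAbs : ℕ) : FiniteAdeleRing ℤ ℚ)) * a =
        a * algebraMap ℤ (FiniteAdeleRing ℤ ℚ) (b : ℤ) := by
      rw [hcast, ← hb, mul_comm]
    rw [this]; exact hmem v
  · have : ((((b : ℤ).natAbs : ℕ) : FiniteAdeleRing ℤ ℚ)) * a =
        -(a * algebraMap ℤ (FiniteAdeleRing ℤ ℚ) (b : ℤ)) := by
      have h2 : algebraMap ℤ (FiniteAdeleRing ℤ ℚ) (b : ℤ) =
          -algebraMap ℤ (FiniteAdeleRing ℤ ℚ) (((b : ℤ).natAbs : ℤ)) := by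
        conv_lhs => rw [hb]
        rw [map_neg]
      rw [hcast, h2]; ring
    rw [this]
    exact neg_mem (hmem v)
end

section
/- The set of functions f in C₀(𝔸_f, ℂ), the algebra of continuous complex-valued functions on the finite adele ring 𝔸_f of ℚ vanishing at infinity, for which there exists a positive natural number n such that f(x) = 0 for every x ∈ 𝔸_f with n·x not integral (i.e. f is supported in the set (1/n)·Ẑ of adeles x such that n·x has p-component in ℤ_p for every prime p), is dense in C₀(𝔸_f, ℂ). -/
open IsDedekindDomain ZeroAtInfty

section AdeleDensityAux

open Set Filter Topology nonZeroDivisors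

noncomputable section

local notation "A" => FiniteAdeleRing ℤ ℚ

/-- The set of integral finite adeles. -/
private def U1 : Set A := {x | ∀ v : HeightOneSpectrum ℤ, x v ∈ v.adicCompletionIntegers ℚ}

/-- The set `(1/n)·Ẑ` of finite adeles `x` such that `n·x` is integral. -/
private def U (n : ℕ) : Set A :=
  {x | ∀ v : HeightOneSpectrum ℤ, ((n : A) * x) v ∈ v.adicCompletionIntegers ℚ}

private lemma isOpen_U1 : IsOpen U1 := by
  exact RestrictedProduct.isOpen_forall_mem (fun v => Valued.isOpen_valuationSubring _)

private lemma isClosed_U1 : IsClosed U1 := by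
  let H : AddSubgroup A :=
    { carrier := U1
      add_mem' := fun {a b} ha hb v => by
        show a v + b v ∈ _
        exact add_mem (ha v) (hb v)
      zero_mem' := fun v => by
        show (0 : HeightOneSpectrum.adicCompletion ℚ v) ∈ _
        exact zero_mem _
      neg_mem' := fun {a} ha v => by
        show -(a v) ∈ _
        exact neg_mem (ha v) }
  exact AddSubgroup.isClosed_of_isOpen H isOpen_U1

private lemma U_eq_preimage (n : ℕ) : U n = (fun x : A => (n : A) * x) ⁻¹' U1 := rfl

private lemma isOpen_U (n : ℕ) : IsOpen (U n) := by
  rw [U_eq_preimage]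
  exact isOpen_U1.preimage (continuous_const.mul continuous_id)

private lemma isClosed_U (n : ℕ) : IsClosed (U n) := by
  rw [U_eq_preimage]
  exact isClosed_U1.preimage (continuous_const.mul continuous_id)

private lemma natCast_apply_mem (k : ℕ) (v : HeightOneSpectrum ℤ) :
    ((k : A)) v ∈ v.adicCompletionIntegers ℚ := by
  induction k with
  | zero => exact zero_mem _
  | succ n ih =>
    have : ((n + 1 : ℕ) : A) v = (n : A) v + (1 : A) v := by
      rw [Nat.cast_succ]; rfl
    rw [this]
    exact add_mem ih (one_mem _)

private lemma U_mul_subset (n k : ℕ) : U n ⊆ U (n * k) := by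
  intro x hx v
  have : ((↑(n * k) : A) * x) v = (k : A) v * (((n : A)) * x) v := by
    push_cast
    show ((n : A) * (k : A) * x) v = _
    rw [mul_comm (n : A) (k : A), mul_assoc]
    rfl
  rw [this]
  exact mul_mem (natCast_apply_mem k v) (hx v)

private lemma U_subset_of_dvd {n m : ℕ} (h : n ∣ m) : U n ⊆ U m := by
  obtain ⟨k, rfl⟩ := h; exact U_mul_subset n k

private lemma exists_den (x : A) : ∃ b : ℤ⁰, ∀ v : HeightOneSpectrum ℤ,
    (x * algebraMap ℤ A (b : ℤ)) v ∈ v.adicCompletionIntegers ℚ := by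
  classical
  have hS : {v : HeightOneSpectrum ℤ | x v ∉ v.adicCompletionIntegers ℚ}.Finite :=
    Filter.eventually_cofinite.1 x.2
  have hloc : ∀ v : HeightOneSpectrum ℤ, ∃ b ∈ ℤ⁰,
      x v * algebraMap ℤ (v.adicCompletion ℚ) b ∈ v.adicCompletionIntegers ℚ :=
    fun v => HeightOneSpectrum.adicCompletion.mul_nonZeroDivisor_mem_adicCompletionIntegers v (x v)
  choose b hb0 hb using hloc
  refine ⟨⟨∏ v ∈ hS.toFinset, b v, prod_mem fun v _ => hb0 v⟩, fun v => ?_⟩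
  have hev : ∀ z : ℤ, (algebraMap ℤ A z) v = algebraMap ℤ (v.adicCompletion ℚ) z := by
    intro z
    have := RingHom.ext_int
      ((RestrictedProduct.evalRingHom (fun v : HeightOneSpectrum ℤ => v.adicCompletion ℚ) v).comp
        (algebraMap ℤ A)) (algebraMap ℤ (v.adicCompletion ℚ))
    exact congrArg (fun φ => φ z) this
  have hint : ∀ z : ℤ, algebraMap ℤ (v.adicCompletion ℚ) z ∈ v.adicCompletionIntegers ℚ :=
    fun z => HeightOneSpectrum.coe_mem_adicCompletionIntegers v z
  show x v * (algebraMap ℤ A _) v ∈ _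
  rw [hev]
  by_cases hv : v ∈ hS.toFinset
  · show x v * algebraMap ℤ _ (∏ v ∈ hS.toFinset, b v) ∈ _
    rw [← Finset.mul_prod_erase _ _ hv, map_mul, ← mul_assoc]
    exact mul_mem (hb v) (hint _)
  · have hxv : x v ∈ v.adicCompletionIntegers ℚ := by simpa using hv
    exact mul_mem hxv (hint _)

/-- Every finite adele lies in `(1/n)·Ẑ` for some positive `n`. -/
private lemma exists_mem_U (x : A) : ∃ n : ℕ, 0 < n ∧ x ∈ U n := by
  obtain ⟨b, hb⟩ := exists_den x
  have hbne : (b : ℤ) ≠ 0 := nonZeroDivisors.coe_ne_zero b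
  refine ⟨(b : ℤ).natAbs, Int.natAbs_pos.2 hbne, ?_⟩
  intro v
  have hcast : (((b : ℤ).natAbs : ℕ) : A) = algebraMap ℤ A ((b : ℤ).natAbs : ℤ) := by
    rw [map_natCast]
  rcases Int.natAbs_eq (b : ℤ) with he | he
  · rw [hcast, ← he, mul_comm]
    exact hb v
  · rw [hcast, show (((b : ℤ).natAbs : ℤ)) = -(b : ℤ) by omega, map_neg, neg_mul]
    show (-(algebraMap ℤ A (b : ℤ) * x)) v ∈ _
    rw [show (-(algebraMap ℤ A (b : ℤ) * x)) v = -((algebraMap ℤ A (b : ℤ) * x) v) from rfl,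
      mul_comm]
    exact neg_mem (hb v)

/-- Every compact subset of the finite adeles is contained in some `(1/N)·Ẑ`. -/
private lemma compact_subset_U {K : Set A} (hK : IsCompact K) : ∃ N : ℕ, 0 < N ∧ K ⊆ U N := by
  have hcov : K ⊆ ⋃ n : ℕ, U (n + 1) := by
    intro x _
    obtain ⟨n, hn, hx⟩ := exists_mem_U x
    exact mem_iUnion.2 ⟨n - 1, by rwa [Nat.sub_add_cancel hn]⟩
  obtain ⟨t, ht⟩ := hK.elim_finite_subcover (fun n : ℕ => U (n + 1))
    (fun n => isOpen_U (n + 1)) hcov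
  refine ⟨∏ n ∈ t, (n + 1), Nat.pos_of_ne_zero (by positivity), ?_⟩
  intro x hx
  obtain ⟨n, hn, hxn⟩ := mem_iUnion₂.1 (ht hx)
  exact U_subset_of_dvd (Finset.dvd_prod_of_mem _ hn) hxn

end

end AdeleDensityAux

open Set Filter Topology
/-- **Density in `C₀(𝔸_f)` of the functions supported on `(1/n)·Ẑ`.**
The set of functions `f` in `C₀(𝔸_f, ℂ)`, the algebra of continuous
complex-valued functions vanishing at infinity on the finite adele ring `𝔸_f`
of `ℚ`, for which there is a positive natural number `n` such that `f x = 0`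
whenever `n • x` is not integral (i.e. `f` is supported in `(1/n)·Ẑ`), is
dense in `C₀(𝔸_f, ℂ)`. -/
theorem dense_compactly_supported_c0_finiteAdeleRing :
    Dense {f : C₀(FiniteAdeleRing ℤ ℚ, ℂ) |
      ∃ n : ℕ, 0 < n ∧
        ∀ x : FiniteAdeleRing ℤ ℚ,
          ¬ (∀ v : HeightOneSpectrum ℤ,
              ((n : FiniteAdeleRing ℤ ℚ) * x) v ∈ v.adicCompletionIntegers ℚ) →
            f x = 0} := by
  rw [Metric.dense_iff]
  intro f ε hε
  classical
  have hti : Tendsto f (cocompact (FiniteAdeleRing ℤ ℚ)) (𝓝 0) := zero_at_infty f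
  have hmem : {x : FiniteAdeleRing ℤ ℚ | dist (f x) 0 < ε / 2} ∈
      cocompact (FiniteAdeleRing ℤ ℚ) :=
    hti (Metric.ball_mem_nhds 0 (by linarith))
  obtain ⟨K, hKc, hKs⟩ := mem_cocompact.1 hmem
  obtain ⟨N, hN, hKU⟩ := compact_subset_U hKc
  let g : C₀(FiniteAdeleRing ℤ ℚ, ℂ) :=
    { toFun := fun x => if x ∈ U N then f x else 0
      continuous_toFun := by
        refine Continuous.if ?_ (map_continuous f) continuous_const
        intro a ha
        rw [show frontier {x : FiniteAdeleRing ℤ ℚ | x ∈ U N} = ∅ from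
          IsClopen.frontier_eq ⟨isClosed_U N, isOpen_U N⟩] at ha
        exact absurd ha (notMem_empty a)
      zero_at_infty' := by
        refine squeeze_zero_norm (a := fun x => ‖f x‖) (fun x => ?_) ?_
        · split
          · exact le_refl _
          · simp
        · simpa using hti.norm }
  refine ⟨g, ?_, ⟨N, hN, fun x hx => ?_⟩⟩
  · rw [Metric.mem_ball, ← ZeroAtInftyContinuousMap.dist_toBCF_eq_dist]
    have hle : dist g.toBCF f.toBCF ≤ ε / 2 := by
      rw [BoundedContinuousFunction.dist_le (by linarith)]
      intro x
      show dist (g x) (f x) ≤ ε / 2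
      by_cases hxU : x ∈ U N
      · simp only [g, ZeroAtInftyContinuousMap.coe_mk, if_pos hxU]
        simp; linarith
      · have hxK : x ∉ K := fun h => hxU (hKU h)
        have h2 : dist (f x) 0 < ε / 2 := hKs hxK
        simp only [g, ZeroAtInftyContinuousMap.coe_mk, if_neg hxU]
        rw [dist_comm]
        exact le_of_lt h2
    linarith
  · show (if x ∈ U N then f x else 0) = 0
    exact if_neg hx
end
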